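/- arXiv:1707.05065 — 10 statements merged into one kernel-verified Lean document; each statement's English description precedes it below -/
import Mathlib

section
/- Let V be a finite set and f : 2^V → ℝ a submodular function with f(∅) = 0. Then max{x⁻(V) : x ∈ B(f)} = min{f(S) : S ⊆ V}. -/
/-!
The base polytope is nonempty (the greedy vector built from a chain of initial segments is a
base) and compact, so `x ↦ x⁻(V)` attains its maximum on it at some base `x`. At a maximizer,
whenever `x v < 0 < x u` some tight set (`x(A) = f(A)`) contains `v` but not `u`: otherwise
shifting a little mass from `u` to `v` stays in `B(f)` and increases `x⁻(V)`. Tight sets are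
closed under union and intersection by submodularity, so some tight set `S` contains every
negative coordinate and no positive one, whence `x⁻(V) = x(S) = f(S)`. The reverse inequality
`y⁻(V) ≤ y(T) ≤ f(T)` is immediate.
-/

open Finset

noncomputable section
open scoped Classical

variable {V : Type*} [Fintype V] [DecidableEq V]

/-- A set function `f : 2^V → ℝ` is submodular if
`f(X∩Y) + f(X∪Y) ≤ f(X) + f(Y)` for all `X, Y ⊆ V`. -/
def IsSubmodular (f : Finset V → ℝ) : Prop :=
  ∀ X Y : Finset V, f (X ∩ Y) + f (X ∪ Y) ≤ f X + f Y

/-- The base polytope `B(f)` of a submodular function. -/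
def basePolytope (f : Finset V → ℝ) : Set (V → ℝ) :=
  {x | (∀ S : Finset V, ∑ v ∈ S, x v ≤ f S) ∧ (∑ v, x v) = f Finset.univ}

section Greedy

variable {n : ℕ} (e : V ≃ Fin n)

def initialSegment (k : ℕ) : Finset V := univ.filter fun u => (e u : ℕ) < k

def greedyBase (f : Finset V → ℝ) (v : V) : ℝ :=
  f (initialSegment e (e v + 1)) - f (initialSegment e (e v))

omit [DecidableEq V] in
lemma initialSegment_zero : initialSegment e 0 = ∅ := by
  simp [initialSegment]

omit [DecidableEq V] in
lemma initialSegment_card : initialSegment e n = univ := by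
  ext u
  simp [initialSegment]

variable {e}

lemma inter_initialSegment_of_forall_le {S : Finset V} {v : V}
    (hmax : ∀ w ∈ S, (e w : ℕ) ≤ e v) : S ∩ initialSegment e (e v) = S.erase v := by
  ext w
  simp only [initialSegment, mem_inter, mem_filter, mem_univ, true_and, mem_erase]
  have : (e w : ℕ) = e v ↔ w = v := by rw [Fin.val_inj, e.injective.eq_iff]
  grind

lemma union_initialSegment_of_forall_le {S : Finset V} {v : V} (hv : v ∈ S)
    (hmax : ∀ w ∈ S, (e w : ℕ) ≤ e v) :
    S ∪ initialSegment e (e v) = initialSegment e (e v + 1) := by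
  ext w
  simp only [initialSegment, mem_union, mem_filter, mem_univ, true_and]
  have : (e w : ℕ) = e v ↔ w = v := by rw [Fin.val_inj, e.injective.eq_iff]
  grind

variable (e) {f : Finset V → ℝ}

lemma sum_greedyBase_le (hf : IsSubmodular f) (h0 : f ∅ = 0) (S : Finset V) :
    ∑ w ∈ S, greedyBase e f w ≤ f S := by
  induction S using Finset.strongInduction with
  | H S ih =>
    rcases S.eq_empty_or_nonempty with rfl | hS
    · simp [h0]
    obtain ⟨v, hv, hmax⟩ := S.exists_max_image (fun w => (e w : ℕ)) hS
    have hsub := hf S (initialSegment e (e v))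
    rw [inter_initialSegment_of_forall_le hmax, union_initialSegment_of_forall_le hv hmax]
      at hsub
    calc ∑ w ∈ S, greedyBase e f w = ∑ w ∈ S.erase v, greedyBase e f w + greedyBase e f v :=
          (sum_erase_add S _ hv).symm
      _ ≤ f (S.erase v) + greedyBase e f v := by gcongr; exact ih _ (erase_ssubset hv)
      _ ≤ f S := by unfold greedyBase; linarith

omit [DecidableEq V] in
lemma sum_greedyBase_univ (h0 : f ∅ = 0) : ∑ w, greedyBase e f w = f univ := by
  let g : ℕ → ℝ := fun k => f (initialSegment e k)
  calc ∑ w, greedyBase e f w = ∑ i : Fin n, (g (i + 1) - g i) :=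
        Fintype.sum_equiv e _ _ fun _ => rfl
    _ = ∑ i ∈ range n, (g (i + 1) - g i) := Fin.sum_univ_eq_sum_range (fun i => g (i + 1) - g i) n
    _ = f univ := by
      rw [sum_range_sub]
      simp only [g, initialSegment_card, initialSegment_zero, h0, sub_zero]

lemma greedyBase_mem_basePolytope (hf : IsSubmodular f) (h0 : f ∅ = 0) :
    greedyBase e f ∈ basePolytope f :=
  ⟨sum_greedyBase_le e hf h0, sum_greedyBase_univ e h0⟩

end Greedy

lemma basePolytope_nonempty {f : Finset V → ℝ} (hf : IsSubmodular f) (h0 : f ∅ = 0) :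
    (basePolytope f).Nonempty :=
  ⟨_, greedyBase_mem_basePolytope (Fintype.equivFin V) hf h0⟩

omit [DecidableEq V] in
lemma isClosed_basePolytope (f : Finset V → ℝ) : IsClosed (basePolytope f) := by
  rw [basePolytope, Set.ofPred_and, Set.ofPred_forall]
  exact (isClosed_iInter fun S => isClosed_le (by fun_prop) continuous_const).inter
    (isClosed_eq (by fun_prop) continuous_const)

lemma isCompact_basePolytope (f : Finset V → ℝ) : IsCompact (basePolytope f) := by
  have hbox : basePolytope f ⊆
      Set.univ.pi fun v => Set.Icc (f univ - f (univ.erase v)) (f {v}) := by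
    intro x hx
    rw [Set.mem_univ_pi]
    intro v
    have hsplit := add_sum_erase univ x (mem_univ v)
    have hrest := hx.1 (univ.erase v)
    have hsingle := hx.1 {v}
    rw [sum_singleton] at hsingle
    exact ⟨by linarith [hx.2], hsingle⟩
  exact (isCompact_univ_pi fun v => isCompact_Icc).of_isClosed_subset
    (isClosed_basePolytope f) hbox

lemma sum_min_zero_le {x : V → ℝ} {T : Finset V} {c : ℝ} (hT : ∑ v ∈ T, x v ≤ c) :
    ∑ v, min (x v) 0 ≤ c :=
  calc ∑ v, min (x v) 0 ≤ ∑ v ∈ T, min (x v) 0 := by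
        rw [← sum_sdiff (subset_univ T)]
        exact add_le_of_nonpos_left (sum_nonpos fun _ _ => min_le_right _ _)
    _ ≤ ∑ v ∈ T, x v := sum_le_sum fun _ _ => min_le_left _ _
    _ ≤ c := hT

omit [DecidableEq V] in
lemma sum_min_zero_eq_sum {x : V → ℝ} {S : Finset V} (hneg : univ.filter (x · < 0) ⊆ S)
    (hpos : Disjoint S (univ.filter (0 < x ·))) : ∑ v, min (x v) 0 = ∑ v ∈ S, x v :=
  calc ∑ v, min (x v) 0 = ∑ v ∈ S, min (x v) 0 :=
        (sum_subset (subset_univ S) fun v _ hvS =>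
          min_eq_right (not_lt.1 fun h => hvS (hneg (mem_filter.2 ⟨mem_univ v, h⟩)))).symm
    _ = ∑ v ∈ S, x v := sum_congr rfl fun v hv =>
        min_eq_left (not_lt.1 fun h => disjoint_left.1 hpos hv (mem_filter.2 ⟨mem_univ v, h⟩))

lemma exists_superset_disjoint_of_separating {p : Finset V → Prop} (hbot : p ∅) (htop : p univ)
    (hinter : ∀ A B, p A → p B → p (A ∩ B)) (hunion : ∀ A B, p A → p B → p (A ∪ B))
    {N P : Finset V} (hsep : ∀ v ∈ N, ∀ u ∈ P, ∃ A, p A ∧ v ∈ A ∧ u ∉ A) :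
    ∃ S, p S ∧ N ⊆ S ∧ Disjoint S P := by
  let T : V → Finset V := fun v => (univ.filter fun A => v ∈ A ∧ p A).inf id
  have hT_mem (v : V) : v ∈ T v :=
    inf_induction (p := fun A => v ∈ A) (mem_univ v) (fun _ h₁ _ h₂ => mem_inter.2 ⟨h₁, h₂⟩)
      fun _ hA => (mem_filter.1 hA).2.1
  have hT_p (v : V) : p (T v) :=
    inf_induction (p := p) htop (fun _ h₁ _ h₂ => hinter _ _ h₁ h₂)
      fun _ hA => (mem_filter.1 hA).2.2
  have hT_le (v : V) (A : Finset V) (hv : v ∈ A) (hA : p A) : T v ⊆ A :=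
    inf_le (f := id) (mem_filter.2 ⟨mem_univ A, hv, hA⟩)
  refine ⟨N.sup T, sup_induction hbot (fun _ h₁ _ h₂ => hunion _ _ h₁ h₂) fun v _ => hT_p v,
    fun v hv => le_sup (f := T) hv (hT_mem v), Finset.disjoint_sup_left.2 fun v hv => ?_⟩
  refine disjoint_right.2 fun u hu huT => ?_
  obtain ⟨A, hA, hvA, huA⟩ := hsep v hv u hu
  exact huA (hT_le v A hvA hA huT)

def IsTight (f : Finset V → ℝ) (x : V → ℝ) (A : Finset V) : Prop := ∑ w ∈ A, x w = f A

omit [Fintype V] in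
lemma IsTight.union_and_inter {f : Finset V → ℝ} {x : V → ℝ} {A B : Finset V}
    (hf : IsSubmodular f) (hx : ∀ S, ∑ w ∈ S, x w ≤ f S)
    (hA : IsTight f x A) (hB : IsTight f x B) : IsTight f x (A ∪ B) ∧ IsTight f x (A ∩ B) := by
  have hsub := hf A B
  have hunion := hx (A ∪ B)
  have hinter := hx (A ∩ B)
  have hmod : ∑ w ∈ A ∪ B, x w + ∑ w ∈ A ∩ B, x w = ∑ w ∈ A, x w + ∑ w ∈ B, x w :=
    sum_union_inter
  unfold IsTight at *
  constructor <;> linarith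

section Transfer

def transfer (x : V → ℝ) (v u : V) (ε : ℝ) : V → ℝ := x + Pi.single v ε - Pi.single u ε

variable {f : Finset V → ℝ} {x : V → ℝ} {u v : V} {ε : ℝ}

omit [Fintype V] in
lemma sum_transfer (A : Finset V) :
    ∑ w ∈ A, transfer x v u ε w =
      ∑ w ∈ A, x w + (if v ∈ A then ε else 0) - (if u ∈ A then ε else 0) := by
  simp only [transfer, Pi.add_apply, Pi.sub_apply, sum_sub_distrib, sum_add_distrib, sum_pi_single']

lemma transfer_mem_basePolytope (hx : x ∈ basePolytope f) (hε : 0 ≤ ε)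
    (hslack : ∀ A : Finset V, v ∈ A → u ∉ A → ε ≤ f A - ∑ w ∈ A, x w) :
    transfer x v u ε ∈ basePolytope f := by
  refine ⟨fun A => ?_, ?_⟩
  · have hxA := hx.1 A
    rw [sum_transfer]
    by_cases hv : v ∈ A <;> by_cases hu : u ∈ A <;> simp only [hv, hu, if_true, if_false]
    · linarith
    · linarith [hslack A hv hu]
    · linarith
    · linarith
  · simp [sum_transfer, hx.2]

lemma sum_min_zero_lt_transfer (hv : x v < 0) (hε : 0 < ε) (hεu : ε ≤ x u) :
    ∑ w, min (x w) 0 < ∑ w, min (transfer x v u ε w) 0 := by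
  have huv : u ≠ v := by rintro rfl; linarith
  refine sum_lt_sum (fun w _ => ?_) ⟨v, mem_univ v, ?_⟩
  · simp only [transfer, Pi.add_apply, Pi.sub_apply, Pi.single_apply]
    by_cases hwv : w = v
    · subst hwv
      simp only [if_true, if_neg huv.symm]
      exact min_le_min (by linarith) le_rfl
    · by_cases hwu : w = u
      · subst hwu
        simp only [if_true, if_neg hwv]
        rw [min_eq_right (by linarith), min_eq_right (by linarith)]
      · simp [hwv, hwu]
  · simp only [transfer, Pi.add_apply, Pi.sub_apply, Pi.single_apply, if_true, if_neg huv.symm,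
      sub_zero, min_eq_left hv.le]
    exact lt_min (by linarith) hv

end Transfer

lemma exists_isTight_mem_not_mem {f : Finset V → ℝ} {x : V → ℝ} (hx : x ∈ basePolytope f)
    (hmax : IsMaxOn (fun y => ∑ w, min (y w) 0) (basePolytope f) x) {u v : V}
    (hv : x v < 0) (hu : 0 < x u) : ∃ A, IsTight f x A ∧ v ∈ A ∧ u ∉ A := by
  by_contra! hnone
  -- every set containing `v` but not `u` is slack, and there are finitely many of them
  have hslack (A : Finset V) : ∀ᶠ ε in nhds 0, v ∈ A → u ∉ A → ε ≤ f A - ∑ w ∈ A, x w := by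
    by_cases hA : v ∈ A ∧ u ∉ A
    · have hlt : ∑ w ∈ A, x w < f A := (hx.1 A).lt_of_ne fun h => hA.2 (hnone A h hA.1)
      exact (eventually_le_nhds (sub_pos.2 hlt)).mono fun _ h _ _ => h
    · exact Filter.Eventually.of_forall fun _ h₁ h₂ => (hA ⟨h₁, h₂⟩).elim
  obtain ⟨ε, hε, hεu, hεA⟩ :=
    ((eventually_le_nhds hu).and (Filter.eventually_all.2 hslack)).exists_gt
  exact (isMaxOn_iff.1 hmax _ (transfer_mem_basePolytope hx hε.le hεA)).not_gt
    (sum_min_zero_lt_transfer hv hε hεu)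

/-- Edmonds' min-max theorem: `max{x⁻(V) : x ∈ B(f)} = min{f(S) : S ⊆ V}`.
There is a base `x` and a set `S` with `x⁻(V) = f(S)`, and weak duality
`y⁻(V) ≤ f(T)` holds for every base `y` and every set `T`. -/
theorem edmonds_minmax (f : Finset V → ℝ) (hf : IsSubmodular f) (h0 : f ∅ = 0) :
    ∃ x ∈ basePolytope f, ∃ S : Finset V,
      (∑ v, min (x v) 0) = f S ∧
      ∀ y ∈ basePolytope f, ∀ T : Finset V, (∑ v, min (y v) 0) ≤ f T := by
  obtain ⟨x, hx, hmax⟩ := (isCompact_basePolytope f).exists_isMaxOn (basePolytope_nonempty hf h0)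
    (by fun_prop : Continuous fun y : V → ℝ => ∑ w, min (y w) 0).continuousOn
  have htight (A B : Finset V) (hA : IsTight f x A) (hB : IsTight f x B) :=
    hA.union_and_inter hf hx.1 hB
  obtain ⟨S, hS, hneg, hpos⟩ := exists_superset_disjoint_of_separating (p := IsTight f x)
    (N := univ.filter (x · < 0)) (P := univ.filter (0 < x ·)) (by simp [IsTight, h0]) hx.2
    (fun A B hA hB => (htight A B hA hB).2) (fun A B hA hB => (htight A B hA hB).1)
    fun v hv u hu => exists_isTight_mem_not_mem hx hmax (mem_filter.1 hv).2 (mem_filter.1 hu).2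
  refine ⟨x, hx, S, ?_, fun y hy T => sum_min_zero_le (hy.1 T)⟩
  rw [sum_min_zero_eq_sum hneg hpos, hS]
end
end

section
/- Let V be a finite set with n = |V|, f : 2^V → ℝ a submodular function with f(∅) = 0, and μ ≥ max{0, −f(V)}. Let w : V → ℝ be a cost function such that wᵀx > 0 for every x ∈ B(f_μ). Then for any enumeration v₁, …, v_n of V with w(v₁) ≤ w(v₂) ≤ … ≤ w(v_n), there exists i ∈ {1, …, n−1} with f({v₁, …, v_i}) < −μ. -/
open Finset

noncomputable section
open scoped Classical

variable {V : Type*} [Fintype V] [DecidableEq V]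

/-- The `μ`-enlargement `f_μ` of `f`. -/
def muEnlargement (f : Finset V → ℝ) (μ : ℝ) : Finset V → ℝ :=
  fun S => if S = ∅ ∨ S = Finset.univ then 0 else f S + μ

lemma muEnlargement_submodular (f : Finset V → ℝ) (hf : IsSubmodular f) (h0 : f ∅ = 0)
    (μ : ℝ) (hμ0 : 0 ≤ μ) (hμV : -(f Finset.univ) ≤ μ) :
    IsSubmodular (muEnlargement f μ) := by
  intro X Y
  by_cases hX0 : X = ∅
  · subst hX0; simp
  by_cases hY0 : Y = ∅
  · subst hY0; simp [add_comm]
  by_cases hXU : X = Finset.univ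
  · subst hXU
    have h1 : Finset.univ ∪ Y = Finset.univ :=
      Finset.univ_subset_iff.mp Finset.subset_union_left
    simp [Finset.univ_inter, h1, add_comm]
  by_cases hYU : Y = Finset.univ
  · subst hYU
    have h1 : X ∪ Finset.univ = Finset.univ :=
      Finset.univ_subset_iff.mp Finset.subset_union_right
    simp [Finset.inter_univ, h1, add_comm]
  have hgX : muEnlargement f μ X = f X + μ := by simp [muEnlargement, hX0, hXU]
  have hgY : muEnlargement f μ Y = f Y + μ := by simp [muEnlargement, hY0, hYU]
  have hIU : X ∩ Y ≠ Finset.univ := by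
    intro h
    exact hXU (Finset.univ_subset_iff.mp (h ▸ Finset.inter_subset_left))
  have hU0 : X ∪ Y ≠ ∅ := by
    intro h
    exact hX0 (Finset.subset_empty.mp (h ▸ Finset.subset_union_left))
  have hsub := hf X Y
  by_cases hI : X ∩ Y = ∅ <;> by_cases hU : X ∪ Y = Finset.univ
  · have h1 : muEnlargement f μ (X ∩ Y) = 0 := by simp [muEnlargement, hI]
    have h2 : muEnlargement f μ (X ∪ Y) = 0 := by simp [muEnlargement, hU]
    rw [h1, h2, hgX, hgY]
    rw [hI, hU, h0] at hsub
    linarith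
  · have h1 : muEnlargement f μ (X ∩ Y) = 0 := by simp [muEnlargement, hI]
    have h2 : muEnlargement f μ (X ∪ Y) = f (X ∪ Y) + μ := by
      simp [muEnlargement, hU0, hU]
    rw [h1, h2, hgX, hgY]
    rw [hI] at hsub
    linarith
  · have h1 : muEnlargement f μ (X ∩ Y) = f (X ∩ Y) + μ := by
      simp [muEnlargement, hI, hIU]
    have h2 : muEnlargement f μ (X ∪ Y) = 0 := by simp [muEnlargement, hU]
    rw [h1, h2, hgX, hgY]
    rw [hU] at hsub
    linarith
  · have h1 : muEnlargement f μ (X ∩ Y) = f (X ∩ Y) + μ := by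
      simp [muEnlargement, hI, hIU]
    have h2 : muEnlargement f μ (X ∪ Y) = f (X ∪ Y) + μ := by
      simp [muEnlargement, hU0, hU]
    rw [h1, h2, hgX, hgY]
    linarith

/-- The prefix set `{v₁, …, v_k}`. -/
def prefS (e : Fin (Fintype.card V) ≃ V) (k : ℕ) : Finset V :=
  (Finset.univ.filter fun j : Fin (Fintype.card V) => (j : ℕ) < k).image e

lemma mem_prefS (e : Fin (Fintype.card V) ≃ V) (k : ℕ) (v : V) :
    v ∈ prefS e k ↔ ((e.symm v : ℕ) < k) := by
  simp only [prefS, Finset.mem_image, Finset.mem_filter, Finset.mem_univ, true_and]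
  constructor
  · rintro ⟨j, hj, rfl⟩; simpa using hj
  · intro h; exact ⟨e.symm v, h, e.apply_symm_apply v⟩

/-- If `w` satisfies `wᵀx > 0` for every `x ∈ B(f_μ)`, then for any enumeration
`v₁, …, v_n` of `V` in nondecreasing order of `w`, some proper nonempty prefix set
`{v₁, …, v_k}` (with `1 ≤ k ≤ n - 1`) satisfies `f({v₁, …, v_k}) < -μ`. -/
theorem minset_lemma (f : Finset V → ℝ) (hf : IsSubmodular f) (h0 : f ∅ = 0)
    (μ : ℝ) (hμ : max 0 (-(f Finset.univ)) ≤ μ)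
    (w : V → ℝ)
    (hw : ∀ x ∈ basePolytope (muEnlargement f μ), 0 < ∑ v, w v * x v)
    (e : Fin (Fintype.card V) ≃ V)
    (hmono : ∀ i j : Fin (Fintype.card V), i ≤ j → w (e i) ≤ w (e j)) :
    ∃ k : ℕ, 1 ≤ k ∧ k ≤ Fintype.card V - 1 ∧
      f ((Finset.univ.filter fun j : Fin (Fintype.card V) => (j : ℕ) < k).image e) < -μ := by
  by_contra hcon
  push_neg at hcon
  have hμ0 : (0:ℝ) ≤ μ := le_trans (le_max_left _ _) hμ
  have hμV : -(f Finset.univ) ≤ μ := le_trans (le_max_right _ _) hμ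
  set g : Finset V → ℝ := muEnlargement f μ with hgdef
  have hgsub : IsSubmodular g := muEnlargement_submodular f hf h0 μ hμ0 hμV
  have hgempty : g ∅ = 0 := by simp [hgdef, muEnlargement]
  have hguniv : g Finset.univ = 0 := by simp [hgdef, muEnlargement]
  have hS0 : prefS e 0 = ∅ := by
    ext v; simp [mem_prefS]
  have hSn : ∀ k, Fintype.card V ≤ k → prefS e k = Finset.univ := by
    intro k hk
    ext v
    simp only [mem_prefS, Finset.mem_univ, iff_true]
    exact lt_of_lt_of_le (e.symm v).isLt hk
  have hSsucc : ∀ k (h : k < Fintype.card V),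
      prefS e (k + 1) = insert (e ⟨k, h⟩) (prefS e k) := by
    intro k h
    ext v
    rw [Finset.mem_insert, mem_prefS, mem_prefS]
    have hv : v = e ⟨k, h⟩ ↔ (e.symm v : ℕ) = k := by
      rw [← Equiv.symm_apply_eq, Fin.ext_iff]
    rw [hv]
    omega
  -- the "marginal values" at each step
  set G : ℕ → ℝ := fun k => g (prefS e k) with hGdef
  have hG0 : G 0 = 0 := by
    show g (prefS e 0) = 0
    rw [hS0]; exact hgempty
  have hGn : ∀ k, Fintype.card V ≤ k → G k = 0 := by
    intro k hk
    show g (prefS e k) = 0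
    rw [hSn k hk]; exact hguniv
  have hGnonneg : ∀ k, 0 ≤ G k := by
    intro k
    rcases Nat.eq_zero_or_pos k with hk0 | hk1
    · subst hk0; rw [hG0]
    rcases le_or_gt (Fintype.card V) k with hkn | hkn
    · rw [hGn k hkn]
    -- 1 ≤ k < card V, so prefS e k is a proper nonempty set
    have hne : prefS e k ≠ ∅ := by
      intro h
      have : e ⟨0, by omega⟩ ∈ prefS e k := by
        rw [mem_prefS]; simp [Equiv.symm_apply_apply]; omega
      rw [h] at this; exact absurd this (Finset.notMem_empty _)
    have hnu : prefS e k ≠ Finset.univ := by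
      intro h
      have : e ⟨k, hkn⟩ ∈ prefS e k := h ▸ Finset.mem_univ _
      rw [mem_prefS] at this
      simp [Equiv.symm_apply_apply] at this
    have hGk : G k = f (prefS e k) + μ := by
      show g (prefS e k) = _
      simp [hgdef, muEnlargement, hne, hnu]
    have hcon' : -μ ≤ f (prefS e k) := hcon k hk1 (by omega)
    rw [hGk]
    linarith
  -- the greedy vertex
  set x : V → ℝ := fun v => G ((e.symm v : ℕ) + 1) - G (e.symm v) with hxdef
  have hx_at : ∀ i : Fin (Fintype.card V), x (e i) = G ((i : ℕ) + 1) - G (i : ℕ) := by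
    intro i
    show G ((e.symm (e i) : ℕ) + 1) - G (e.symm (e i)) = _
    rw [Equiv.symm_apply_apply]
  -- key inequality: prefix sums bounded by g
  have hkey : ∀ (T : Finset V) (k : ℕ), ∑ v ∈ T ∩ prefS e k, x v ≤ g (T ∩ prefS e k) := by
    intro T k
    induction k with
    | zero =>
      rw [hS0, Finset.inter_empty, Finset.sum_empty, hgempty]
    | succ k ih =>
      rcases le_or_gt (Fintype.card V) k with hkn | hkn
      · have heq : prefS e (k + 1) = prefS e k := by
          rw [hSn k hkn, hSn (k+1) (by omega)]
        rw [heq]; exact ih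
      · set v := e ⟨k, hkn⟩ with hvdef
        have hvS : v ∉ prefS e k := by
          rw [hvdef, mem_prefS, Equiv.symm_apply_apply]
          simp
        rw [hSsucc k hkn, ← hvdef]
        by_cases hvT : v ∈ T
        · have hins : T ∩ insert v (prefS e k) = insert v (T ∩ prefS e k) := by
            ext u
            simp only [Finset.mem_inter, Finset.mem_insert]
            constructor
            · rintro ⟨hu, hu' | hu'⟩
              · left; exact hu'
              · right; exact ⟨hu, hu'⟩
            · rintro (rfl | ⟨hu, hu'⟩)
              · exact ⟨hvT, Or.inl rfl⟩
              · exact ⟨hu, Or.inr hu'⟩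
          rw [hins]
          have hvTS : v ∉ T ∩ prefS e k := fun h => hvS (Finset.mem_inter.mp h).2
          rw [Finset.sum_insert hvTS]
          have hxv : x v = G (k + 1) - G k := by
            show G ((e.symm v : ℕ) + 1) - G (e.symm v) = _
            rw [hvdef, Equiv.symm_apply_apply]
          -- submodularity step
          have hsub := hgsub (insert v (T ∩ prefS e k)) (prefS e k)
          have hint : insert v (T ∩ prefS e k) ∩ prefS e k = T ∩ prefS e k := by
            rw [Finset.insert_inter_of_notMem hvS]
            ext u
            simp only [Finset.mem_inter]
            tauto
          have huni : insert v (T ∩ prefS e k) ∪ prefS e k = insert v (prefS e k) := by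
            ext u
            simp only [Finset.mem_union, Finset.mem_insert, Finset.mem_inter]
            tauto
          rw [hint, huni] at hsub
          have hGk1 : g (insert v (prefS e k)) = G (k + 1) := by
            show _ = g (prefS e (k + 1))
            rw [hSsucc k hkn]
          have hGk : g (prefS e k) = G k := rfl
          rw [hGk1, hGk] at hsub
          rw [hxv]
          linarith
        · have hins : T ∩ insert v (prefS e k) = T ∩ prefS e k := by
            ext u
            simp only [Finset.mem_inter, Finset.mem_insert]
            constructor
            · rintro ⟨hu, rfl | hu'⟩
              · exact absurd hu hvT
              · exact ⟨hu, hu'⟩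
            · rintro ⟨hu, hu'⟩; exact ⟨hu, Or.inr hu'⟩
          rw [hins]; exact ih
  -- x is in the base polytope
  have hmem : x ∈ basePolytope g := by
    constructor
    · intro T
      have h := hkey T (Fintype.card V)
      rw [hSn _ le_rfl, Finset.inter_univ] at h
      exact h
    · have h1 : ∑ v, x v = ∑ i : Fin (Fintype.card V), x (e i) := (Equiv.sum_comp e x).symm
      rw [h1]
      have h2 : ∑ i : Fin (Fintype.card V), x (e i)
          = ∑ i ∈ Finset.range (Fintype.card V), (G (i + 1) - G i) := by
        rw [← Fin.sum_univ_eq_sum_range (fun i => G (i + 1) - G i) (Fintype.card V)]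
        exact Finset.sum_congr rfl fun i _ => hx_at i
      rw [h2, Finset.sum_range_sub, hG0, hGn _ le_rfl, hguniv]
      ring
  have hpos := hw x hmem
  -- now show ∑ v, w v * x v ≤ 0, a contradiction
  rcases Nat.eq_zero_or_pos (Fintype.card V) with hn0 | hn1
  · have : IsEmpty V := Fintype.card_eq_zero_iff.mp hn0
    rw [Finset.univ_eq_empty, Finset.sum_empty] at hpos
    exact absurd hpos (lt_irrefl 0)
  · set a : ℕ → ℝ := fun i => w (e ⟨min i (Fintype.card V - 1), by omega⟩) with hadef
    have amono : ∀ i j : ℕ, i ≤ j → a i ≤ a j := by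
      intro i j hij
      show w (e ⟨min i (Fintype.card V - 1), by omega⟩)
          ≤ w (e ⟨min j (Fintype.card V - 1), by omega⟩)
      exact hmono _ _ (by rw [Fin.mk_le_mk]; omega)
    have a_eq : ∀ i : Fin (Fintype.card V), a (i : ℕ) = w (e i) := by
      intro i
      show w (e ⟨min (i : ℕ) (Fintype.card V - 1), by omega⟩) = w (e i)
      congr 1
      apply congrArg
      apply Fin.ext
      show min (i : ℕ) (Fintype.card V - 1) = (i : ℕ)
      have := i.isLt
      omega
    have habel : ∀ m : ℕ, ∑ i ∈ Finset.range m, a i * (G (i + 1) - G i) ≤ a m * G m := by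
      intro m
      induction m with
      | zero => simp [hG0]
      | succ m ih =>
        rw [Finset.sum_range_succ]
        have h1 : a m * G (m + 1) ≤ a (m + 1) * G (m + 1) :=
          mul_le_mul_of_nonneg_right (amono m (m + 1) (by omega)) (hGnonneg (m + 1))
        nlinarith [ih]
    have hsum : ∑ v, w v * x v = ∑ i ∈ Finset.range (Fintype.card V), a i * (G (i + 1) - G i) := by
      rw [← Equiv.sum_comp e (fun v => w v * x v)]
      rw [← Fin.sum_univ_eq_sum_range (fun i => a i * (G (i + 1) - G i)) (Fintype.card V)]
      refine Finset.sum_congr rfl fun i _ => ?_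
      rw [a_eq i, hx_at i]
    have hfin := habel (Fintype.card V)
    rw [hGn _ le_rfl, mul_zero] at hfin
    rw [hsum] at hpos
    linarith
end
end

section
/- Let V be a finite set, f : 2^V → ℝ a submodular function with f(∅) = 0, and μ ≥ max{0, −f(V)} a value such that μ = −f(W) for some W ⊆ V. Then L₁(f_μ) ≤ 4 · L₁(f). -/
open Finset

noncomputable section
open scoped Classical

variable {V : Type*} [Fintype V] [DecidableEq V]

/-- `L₁(f) = max{‖z‖₁ : z ∈ B(f)}`. -/
noncomputable def Lone (f : Finset V → ℝ) : ℝ :=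
  sSup {t : ℝ | ∃ x ∈ basePolytope f, t = ∑ v, |x v|}

/-!
Every value `f S` is attained as `x(S)` by a greedy base `x` of `B(f)` built along an ordering
of `V` that starts with `S`, so `|f S| ≤ ‖x‖₁ ≤ L₁(f)`; in particular `μ = -f W ≤ L₁(f)`.
A base `y` of `B(f_μ)` has `y(V) = 0`, hence `‖y‖₁ = 2 y(P)` for its positive support `P`,
and `y(P) ≤ f_μ(P) ≤ f(P) + μ ≤ 2 L₁(f)`.
-/

def IsBaseOn (f : Finset V → ℝ) (U : Finset V) (x : V → ℝ) : Prop :=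
  (∀ T ⊆ U, ∑ v ∈ T, x v ≤ f T) ∧ ∑ v ∈ U, x v = f U

lemma isBaseOn_univ_iff {f : Finset V → ℝ} {x : V → ℝ} :
    IsBaseOn f univ x ↔ x ∈ basePolytope f := by
  simp [IsBaseOn, basePolytope]

lemma isBaseOn_empty {f : Finset V → ℝ} (h0 : f ∅ = 0) (x : V → ℝ) : IsBaseOn f ∅ x :=
  ⟨fun T hT => by simp [subset_empty.mp hT, h0], by simp [h0]⟩

lemma IsBaseOn.insert_update {f : Finset V → ℝ} (hf : IsSubmodular f) {U : Finset V} {a : V}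
    (ha : a ∉ U) {x : V → ℝ} (hx : IsBaseOn f U x) :
    IsBaseOn f (insert a U) (Function.update x a (f (insert a U) - f U)) := by
  refine ⟨fun T hT => ?_, ?_⟩
  · by_cases haT : a ∈ T
    · have hTa : T.erase a ⊆ U := fun v hv =>
        (mem_insert.mp (hT (mem_of_mem_erase hv))).resolve_left (ne_of_mem_erase hv)
      have hinter : U ∩ T = T.erase a := by
        ext v
        simp only [mem_inter, mem_erase]
        exact ⟨fun ⟨hvU, hvT⟩ => ⟨by rintro rfl; exact ha hvU, hvT⟩,
          fun hv => ⟨hTa (mem_erase.mpr hv), hv.2⟩⟩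
      have hunion : U ∪ T = insert a U :=
        union_subset (subset_insert a U) hT |>.antisymm
          (insert_subset (mem_union_right U haT) subset_union_left)
      have hsub := hf U T
      rw [hinter, hunion] at hsub
      rw [sum_update_of_mem haT, sdiff_singleton_eq_erase]
      linarith [hx.1 _ hTa]
    · rw [sum_update_of_notMem haT]
      exact hx.1 T fun v hv => (mem_insert.mp (hT hv)).resolve_left (by rintro rfl; exact haT hv)
  · rw [sum_update_of_mem (mem_insert_self a U), sdiff_singleton_eq_erase, erase_insert ha, hx.2]
    ring

lemma IsBaseOn.exists_extend {f : Finset V → ℝ} (hf : IsSubmodular f) {S U : Finset V}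
    (hSU : S ⊆ U) {x : V → ℝ} (hx : IsBaseOn f S x) :
    ∃ y, IsBaseOn f U y ∧ ∑ v ∈ S, y v = f S := by
  suffices ∀ D ⊆ U \ S, ∃ y, IsBaseOn f (S ∪ D) y ∧ ∑ v ∈ S, y v = f S by
    simpa [union_sdiff_of_subset hSU] using this (U \ S) subset_rfl
  intro D hD
  induction D using Finset.induction_on with
  | empty => exact ⟨x, by simpa using hx, hx.2⟩
  | insert a D haD ih =>
    obtain ⟨haUS, hDUS⟩ := insert_subset_iff.mp hD
    obtain ⟨y, hy, hyS⟩ := ih hDUS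
    have haS : a ∉ S := (mem_sdiff.mp haUS).2
    refine ⟨_, union_insert a S D ▸ hy.insert_update hf (by simp [haS, haD]), ?_⟩
    rwa [sum_update_of_notMem haS]

lemma exists_mem_basePolytope_sum_eq {f : Finset V → ℝ} (hf : IsSubmodular f) (h0 : f ∅ = 0)
    (S : Finset V) : ∃ x ∈ basePolytope f, ∑ v ∈ S, x v = f S := by
  obtain ⟨x, hx, -⟩ := (isBaseOn_empty h0 0).exists_extend hf (empty_subset S)
  obtain ⟨y, hy, hyS⟩ := hx.exists_extend hf (subset_univ S)
  exact ⟨y, isBaseOn_univ_iff.mp hy, hyS⟩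

lemma sum_abs_eq_two_mul_sum_pos_sub (x : V → ℝ) :
    ∑ v, |x v| = 2 * ∑ v ∈ univ.filter (fun v => 0 < x v), x v - ∑ v, x v := by
  have habs : ∀ v, |x v| = 2 * (if 0 < x v then x v else 0) - x v := fun v => by
    split_ifs with h
    · rw [abs_of_pos h]; ring
    · rw [abs_of_nonpos (not_lt.mp h)]; ring
  simp only [habs, sum_sub_distrib, ← mul_sum, sum_filter]

lemma sum_abs_le_of_mem_basePolytope {g : Finset V → ℝ} {M : ℝ} (hM : ∀ S, g S ≤ M)
    {x : V → ℝ} (hx : x ∈ basePolytope g) : ∑ v, |x v| ≤ 2 * M - g univ := by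
  rw [sum_abs_eq_two_mul_sum_pos_sub, hx.2]
  linarith [hx.1 (univ.filter fun v => 0 < x v), hM (univ.filter fun v => 0 < x v)]

lemma bddAbove_sum_abs_basePolytope (g : Finset V → ℝ) :
    BddAbove {t : ℝ | ∃ x ∈ basePolytope g, t = ∑ v, |x v|} := by
  obtain ⟨M, hM⟩ := (Set.finite_range g).bddAbove
  refine ⟨2 * M - g univ, ?_⟩
  rintro t ⟨x, hx, rfl⟩
  exact sum_abs_le_of_mem_basePolytope (fun S => hM ⟨S, rfl⟩) hx

lemma sum_abs_le_Lone {g : Finset V → ℝ} {x : V → ℝ} (hx : x ∈ basePolytope g) :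
    ∑ v, |x v| ≤ Lone g :=
  le_csSup (bddAbove_sum_abs_basePolytope g) ⟨x, hx, rfl⟩

lemma Lone_le {g : Finset V → ℝ} {M : ℝ} (hM : ∀ S, g S ≤ M) (hpos : 0 ≤ 2 * M - g univ) :
    Lone g ≤ 2 * M - g univ := by
  refine Real.sSup_le ?_ hpos
  rintro t ⟨x, hx, rfl⟩
  exact sum_abs_le_of_mem_basePolytope hM hx

lemma abs_le_Lone {f : Finset V → ℝ} (hf : IsSubmodular f) (h0 : f ∅ = 0) (S : Finset V) :
    |f S| ≤ Lone f := by
  obtain ⟨x, hx, hxS⟩ := exists_mem_basePolytope_sum_eq hf h0 S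
  calc |f S| = |∑ v ∈ S, x v| := by rw [hxS]
    _ ≤ ∑ v ∈ S, |x v| := abs_sum_le_sum_abs _ _
    _ ≤ ∑ v, |x v| := sum_le_sum_of_subset_of_nonneg (subset_univ S) fun v _ _ => abs_nonneg _
    _ ≤ Lone f := sum_abs_le_Lone hx

lemma muEnlargement_le {f : Finset V → ℝ} {μ L : ℝ} (hf : ∀ S, f S ≤ L) (hμ : μ ≤ L)
    (hL : 0 ≤ L) (S : Finset V) : muEnlargement f μ S ≤ 2 * L := by
  unfold muEnlargement
  split_ifs
  · linarith
  · linarith [hf S]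

theorem Lone_muEnlargement_le_general (f : Finset V → ℝ) (hf : IsSubmodular f) (h0 : f ∅ = 0)
    (μ : ℝ) (W : Finset V) (hW : f W = -μ) :
    Lone (muEnlargement f μ) ≤ 4 * Lone f := by
  have hL : ∀ S, |f S| ≤ Lone f := abs_le_Lone hf h0
  have hL0 : 0 ≤ Lone f := by simpa [h0] using hL ∅
  have hμ : μ ≤ Lone f := by simpa [hW] using neg_le_of_abs_le (hL W)
  have hfμ : ∀ S, muEnlargement f μ S ≤ 2 * Lone f :=
    muEnlargement_le (fun S => (le_abs_self _).trans (hL S)) hμ hL0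
  have huniv : muEnlargement f μ univ = 0 := by simp [muEnlargement]
  calc Lone (muEnlargement f μ) ≤ 2 * (2 * Lone f) - muEnlargement f μ univ :=
        Lone_le hfμ (by linarith)
    _ = 4 * Lone f := by rw [huniv]; ring

/-- If `μ ≥ max{0, -f(V)}` and `μ = -f(W)` for some `W ⊆ V`, then
`L₁(f_μ) ≤ 4 L₁(f)`. -/
theorem Lone_muEnlargement_le (f : Finset V → ℝ) (hf : IsSubmodular f) (h0 : f ∅ = 0)
    (μ : ℝ) (hμ : max 0 (-(f Finset.univ)) ≤ μ)
    (W : Finset V) (hW : f W = -μ) :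
    Lone (muEnlargement f μ) ≤ 4 * Lone f :=
  Lone_muEnlargement_le_general f hf h0 μ W hW
end
end

section
/- Let V be a finite set with n = |V| and f : 2^V → ℤ an integer-valued submodular function with f(∅) = 0. Let μ be a nonnegative integer such that min_{S⊆V} f(S) < −μ ≤ min{0, f(V)}, and let z be the point of minimum Euclidean norm in B(f_μ). Then ‖z‖₂ ≥ 1/√n, and consequently width_{F_μ}(x) ≥ 1/√n for every x ∈ B(f_μ). -/
open Finset

noncomputable section
open scoped Classical

variable {V : Type*} [Fintype V] [DecidableEq V]

/-- `L₂(f) = max{‖z‖₂ : z ∈ B(f)}`. -/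
noncomputable def Ltwo (f : Finset V → ℝ) : ℝ :=
  sSup {t : ℝ | ∃ x ∈ basePolytope f, t = Real.sqrt (∑ v, (x v) ^ 2)}

/-- `F_μ = Σ_μ ∩ 𝔹ⁿ`, where `Σ_μ = {w : wᵀx ≥ 0 for all x ∈ B(f_μ)}` and
`𝔹ⁿ` is the Euclidean unit ball. -/
def Fmu (f : Finset V → ℝ) (μ : ℝ) : Set (V → ℝ) :=
  {w | (∀ x ∈ basePolytope (muEnlargement f μ), 0 ≤ ∑ v, w v * x v) ∧
    (∑ v, (w v) ^ 2) ≤ 1}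

/-- `width_X(a) = max{aᵀz : z ∈ X}`. -/
noncomputable def widthIn (X : Set (V → ℝ)) (a : V → ℝ) : ℝ :=
  sSup {t : ℝ | ∃ z ∈ X, t = ∑ v, a v * z v}

/-- The condition number `ω_μ = min{width_{F_μ}(x)/‖x‖₂ : x ∈ B(f_μ), x ≠ 0}`. -/
noncomputable def omegaMu (f : Finset V → ℝ) (μ : ℝ) : ℝ :=
  sInf {t : ℝ | ∃ x ∈ basePolytope (muEnlargement f μ), x ≠ 0 ∧
    t = widthIn (Fmu f μ) x / Real.sqrt (∑ v, (x v) ^ 2)}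

/-- For an integer valued submodular function `f` and a nonnegative integer `μ`
with `min_S f(S) < -μ ≤ min{0, f(V)}`, the minimum norm point `z` of `B(f_μ)`
satisfies `‖z‖₂ ≥ 1/√n`, and consequently `width_{F_μ}(x) ≥ 1/√n` for every
`x ∈ B(f_μ)`. -/
theorem min_norm_width_lower_bound (f : Finset V → ℝ) (hf : IsSubmodular f) (h0 : f ∅ = 0)
    (hint : ∀ S : Finset V, ∃ m : ℤ, f S = (m : ℝ))
    (μ : ℕ)
    (hlow : ∃ S : Finset V, f S < -(μ : ℝ))
    (hup : -(μ : ℝ) ≤ min 0 (f Finset.univ))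
    (z : V → ℝ) (hz : z ∈ basePolytope (muEnlargement f (μ : ℝ)))
    (hmin : ∀ x ∈ basePolytope (muEnlargement f (μ : ℝ)),
      Real.sqrt (∑ v, (z v) ^ 2) ≤ Real.sqrt (∑ v, (x v) ^ 2)) :
    1 / Real.sqrt (Fintype.card V) ≤ Real.sqrt (∑ v, (z v) ^ 2) ∧
    ∀ x ∈ basePolytope (muEnlargement f (μ : ℝ)),
      1 / Real.sqrt (Fintype.card V) ≤ widthIn (Fmu f (μ : ℝ)) x := by

  classical
  obtain ⟨S, hS⟩ := hlow
  have hup0 : -(μ:ℝ) ≤ 0 := le_trans hup (min_le_left _ _)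
  have hupV : -(μ:ℝ) ≤ f Finset.univ := le_trans hup (min_le_right _ _)
  have hSne : S ≠ ∅ := by rintro rfl; rw [h0] at hS; linarith
  have hSnu : S ≠ Finset.univ := by rintro rfl; linarith
  have hS1 : f S + (μ:ℝ) ≤ -1 := by
    obtain ⟨m, hm⟩ := hint S
    have h1 : (m:ℝ) + (μ:ℝ) < 0 := by rw [hm] at hS; linarith
    have h2 : m + (μ:ℤ) < 0 := by exact_mod_cast h1
    have h3 : m + (μ:ℤ) ≤ -1 := by omega
    rw [hm]
    have : ((m + (μ:ℤ) : ℤ) : ℝ) ≤ ((-1 : ℤ) : ℝ) := by exact_mod_cast h3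
    push_cast at this
    linarith
  have hzS : ∑ v ∈ S, z v ≤ -1 := by
    have h1 := hz.1 S
    rw [muEnlargement] at h1
    simp only [if_neg (by tauto : ¬(S = ∅ ∨ S = Finset.univ))] at h1
    linarith
  set n := Fintype.card V with hn
  set N := ∑ v, z v ^ 2 with hN
  have hNnn : 0 ≤ N := Finset.sum_nonneg fun v _ => sq_nonneg _
  have hcs : (∑ v ∈ S, z v)^2 ≤ (S.card : ℝ) * ∑ v ∈ S, z v ^ 2 := by
    have h := Finset.sum_mul_sq_le_sq_mul_sq S (fun _ => (1:ℝ)) z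
    simpa using h
  have hsub : ∑ v ∈ S, z v ^ 2 ≤ N :=
    Finset.sum_le_sum_of_subset_of_nonneg (Finset.subset_univ S) (fun v _ _ => sq_nonneg _)
  have hcard : (S.card : ℝ) ≤ (n : ℝ) := by exact_mod_cast Finset.card_le_univ S
  have hSsqnn : (0:ℝ) ≤ ∑ v ∈ S, z v ^ 2 := Finset.sum_nonneg fun v _ => sq_nonneg _
  have hone : (1:ℝ) ≤ (∑ v ∈ S, z v)^2 := by nlinarith
  have hnN : (1:ℝ) ≤ (n:ℝ) * N := by nlinarith
  have hNpos : 0 < N := by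
    rcases lt_or_ge 0 N with h | h
    · exact h
    · exfalso
      have hn0 : (0:ℝ) ≤ (n:ℝ) := Nat.cast_nonneg n
      nlinarith
  have hnpos : (0:ℝ) < (n:ℝ) := by nlinarith
  have hsqrtn : 0 < Real.sqrt n := Real.sqrt_pos.mpr hnpos
  have hsqrtN : 0 < Real.sqrt N := Real.sqrt_pos.mpr hNpos
  have hfirst : 1 / Real.sqrt n ≤ Real.sqrt N := by
    rw [div_le_iff₀ hsqrtn]
    calc (1:ℝ) = Real.sqrt 1 := (Real.sqrt_one).symm
      _ ≤ Real.sqrt (N * n) := Real.sqrt_le_sqrt (by nlinarith)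
      _ = Real.sqrt N * Real.sqrt n := Real.sqrt_mul hNnn _
  have hkey : ∀ x ∈ basePolytope (muEnlargement f (μ:ℝ)), N ≤ ∑ v, z v * x v := by
    intro x hx
    set D := ∑ v, z v * (x v - z v) with hD
    set E := ∑ v, (x v - z v)^2 with hE
    have hEnn : 0 ≤ E := Finset.sum_nonneg fun v _ => sq_nonneg _
    have hmem : ∀ t : ℝ, 0 ≤ t → t ≤ 1 →
        (fun v => z v + t * (x v - z v)) ∈ basePolytope (muEnlargement f (μ:ℝ)) := by
      intro t ht ht1
      constructor
      · intro T
        have h1 := hz.1 T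
        have h2 := hx.1 T
        have hexp : ∑ v ∈ T, (z v + t * (x v - z v))
            = ∑ v ∈ T, z v + t * (∑ v ∈ T, x v - ∑ v ∈ T, z v) := by
          rw [Finset.sum_add_distrib, ← Finset.mul_sum, Finset.sum_sub_distrib]
        rw [hexp]
        nlinarith
      · have h1 := hz.2
        have h2 := hx.2
        have hexp : ∑ v, (z v + t * (x v - z v))
            = ∑ v, z v + t * (∑ v, x v - ∑ v, z v) := by
          rw [Finset.sum_add_distrib, ← Finset.mul_sum, Finset.sum_sub_distrib]
        rw [hexp, h1, h2]
        ring
    have hq : ∀ t : ℝ, 0 ≤ t → t ≤ 1 → 0 ≤ 2*t*D + t^2*E := by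
      intro t ht ht1
      have hm := hmin _ (hmem t ht ht1)
      have hnn2 : 0 ≤ ∑ v, (z v + t * (x v - z v))^2 :=
        Finset.sum_nonneg fun v _ => sq_nonneg _
      have hle : N ≤ ∑ v, (z v + t * (x v - z v))^2 :=
        (Real.sqrt_le_sqrt_iff hnn2).mp hm
      have hexp : ∑ v, (z v + t * (x v - z v))^2 = N + 2*t*D + t^2*E := by
        rw [hN, hD, hE, Finset.mul_sum, Finset.mul_sum, ← Finset.sum_add_distrib,
          ← Finset.sum_add_distrib]
        exact Finset.sum_congr rfl fun v _ => by ring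
      rw [hexp] at hle
      linarith
    have hDnn : 0 ≤ D := by
      by_contra hD0
      push_neg at hD0
      rcases eq_or_lt_of_le hEnn with hE0 | hEpos
      · have h := hq 1 zero_le_one le_rfl
        linarith
      · set t := min 1 (-D / E) with htd
        have htpos : 0 < t := lt_min one_pos (div_pos (by linarith) hEpos)
        have ht1 : t ≤ 1 := min_le_left _ _
        have htE : t * E ≤ -D := by
          have h := min_le_right 1 (-D / E)
          calc t * E ≤ (-D/E) * E := mul_le_mul_of_nonneg_right h hEnn
            _ = -D := by field_simp
        have h := hq t htpos.le ht1
        have h2 : t*(t*E) ≤ t*(-D) := mul_le_mul_of_nonneg_left htE htpos.le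
        have h2' : t^2*E ≤ -(t*D) := by
          calc t^2*E = t*(t*E) := by ring
            _ ≤ t*(-D) := h2
            _ = -(t*D) := by ring
        have h3 : 0 < -(t*D) := by
          have := mul_pos htpos (show (0:ℝ) < -D by linarith)
          linarith [this]
        linarith [h, h2', h3]
    have hzx : ∑ v, z v * x v = N + D := by
      rw [hN, hD, ← Finset.sum_add_distrib]
      exact Finset.sum_congr rfl fun v _ => by ring
    linarith
  refine ⟨hfirst, ?_⟩
  intro x hx
  set w : V → ℝ := fun v => z v / Real.sqrt N with hw
  have hwsq : ∑ v, (w v)^2 = 1 := by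
    simp only [hw, div_pow]
    rw [← Finset.sum_div, Real.sq_sqrt hNnn, ← hN, div_self hNpos.ne']
  have hwF : w ∈ Fmu f (μ:ℝ) := by
    refine ⟨?_, le_of_eq hwsq⟩
    intro y hy
    have hk := hkey y hy
    have heq : ∑ v, w v * y v = (∑ v, z v * y v) / Real.sqrt N := by
      rw [Finset.sum_div]
      refine Finset.sum_congr rfl fun v _ => ?_
      simp only [hw]
      ring
    rw [heq]
    exact div_nonneg (le_trans hNnn hk) hsqrtN.le
  have hbdd : BddAbove {t : ℝ | ∃ w' ∈ Fmu f (μ:ℝ), t = ∑ v, x v * w' v} := by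
    refine ⟨Real.sqrt (∑ v, (x v)^2), ?_⟩
    rintro t ⟨w', hw', rfl⟩
    have hcs2 := Finset.sum_mul_sq_le_sq_mul_sq Finset.univ x w'
    have hxnn : (0:ℝ) ≤ ∑ v, (x v)^2 := Finset.sum_nonneg fun v _ => sq_nonneg _
    have h1 : (∑ v, x v * w' v)^2 ≤ ∑ v, (x v)^2 := by
      calc (∑ v, x v * w' v)^2 ≤ (∑ v, (x v)^2) * ∑ v, (w' v)^2 := hcs2
        _ ≤ (∑ v, (x v)^2) * 1 := mul_le_mul_of_nonneg_left hw'.2 hxnn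
        _ = ∑ v, (x v)^2 := mul_one _
    calc ∑ v, x v * w' v ≤ |∑ v, x v * w' v| := le_abs_self _
      _ = Real.sqrt ((∑ v, x v * w' v)^2) := (Real.sqrt_sq_eq_abs _).symm
      _ ≤ Real.sqrt (∑ v, (x v)^2) := Real.sqrt_le_sqrt h1
  have hle : (∑ v, x v * w v) ≤ widthIn (Fmu f (μ:ℝ)) x :=
    le_csSup hbdd ⟨w, hwF, rfl⟩
  have heq2 : ∑ v, x v * w v = (∑ v, z v * x v) / Real.sqrt N := by
    rw [Finset.sum_div]
    refine Finset.sum_congr rfl fun v _ => ?_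
    simp only [hw]
    ring
  have hval : Real.sqrt N ≤ ∑ v, x v * w v := by
    rw [heq2, le_div_iff₀ hsqrtN]
    calc Real.sqrt N * Real.sqrt N = N := Real.mul_self_sqrt hNnn
      _ ≤ ∑ v, z v * x v := hkey x hx
  calc 1 / Real.sqrt n ≤ Real.sqrt N := hfirst
    _ ≤ ∑ v, x v * w v := hval
    _ ≤ widthIn (Fmu f (μ:ℝ)) x := hle
end
end

section
/- Let V be a finite set, f : 2^V → ℝ a submodular function with f(∅) = 0, δ > 0, and L = L₁(f). Suppose y ∈ B(f) and W ⊆ V satisfy f(W) ≤ y⁻(V) + δL. If v ∈ V satisfies y(v) < −δL, then every minimizer of f over 2^V contains v. -/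
open Finset

noncomputable section
open scoped Classical

variable {V : Type*} [Fintype V] [DecidableEq V]

/-- If `y ∈ B(f)` and `W` satisfy `f(W) ≤ y⁻(V) + δ L₁(f)` and `y(v) < -δ L₁(f)`,
then `v` is contained in every minimizer of `f`. -/
theorem contract_element (f : Finset V → ℝ) (hf : IsSubmodular f) (h0 : f ∅ = 0)
    (δ : ℝ) (hδ : 0 < δ)
    (y : V → ℝ) (hy : y ∈ basePolytope f)
    (W : Finset V) (hW : f W ≤ (∑ v, min (y v) 0) + δ * Lone f)
    (v : V) (hv : y v < -(δ * Lone f)) :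
    ∀ S : Finset V, (∀ T : Finset V, f S ≤ f T) → v ∈ S := by
  intro S hS
  by_contra hvS
  have hL : 0 ≤ Lone f := by
    apply Real.sSup_nonneg
    rintro t ⟨x, -, rfl⟩
    exact Finset.sum_nonneg fun u _ => abs_nonneg _
  have hδL : 0 ≤ δ * Lone f := mul_nonneg hδ.le hL
  have hyv : y v < 0 := lt_of_lt_of_le hv (by linarith)
  have h1 : ∑ u ∈ S, y u ≤ f S := hy.1 S
  have h2 : ∑ u ∈ S, min (y u) 0 ≤ ∑ u ∈ S, y u :=
    Finset.sum_le_sum fun u _ => min_le_left _ _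
  have hsub : S ⊆ Finset.univ.erase v := fun u hu =>
    Finset.mem_erase.mpr ⟨fun h => hvS (h ▸ hu), Finset.mem_univ u⟩
  have h3 : ∑ u ∈ Finset.univ.erase v, min (y u) 0 ≤ ∑ u ∈ S, min (y u) 0 := by
    have := Finset.sum_sdiff (f := fun u => min (y u) 0) hsub
    have hnp : ∑ u ∈ Finset.univ.erase v \ S, min (y u) 0 ≤ 0 :=
      Finset.sum_nonpos fun u _ => min_le_right _ _
    linarith
  have h4 : ∑ u ∈ Finset.univ.erase v, min (y u) 0
      = (∑ u, min (y u) 0) - min (y v) 0 :=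
    Finset.sum_erase_eq_sub (Finset.mem_univ v)
  have h5 : min (y v) 0 = y v := min_eq_left hyv.le
  have h6 : f S ≤ f W := hS W
  linarith
end
end

section
/- Let V be a finite set, f : 2^V → ℝ a submodular function with f(∅) = 0, and F ⊆ 2^V a ring family containing ∅ and V that separates points. Then for every X, Y ∈ F with X ⊆ Y, f(X) + ∑_{v ∈ Y\X} ℓ(v) ≤ f(Y). -/
open Finset

noncomputable section
open scoped Classical

variable {V : Type*} [Fintype V] [DecidableEq V]

/-- `F ⊆ 2^V` is a ring family containing `∅` and `V`:
closed under union and intersection. -/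
def IsRingFamily (F : Set (Finset V)) : Prop :=
  ∅ ∈ F ∧ Finset.univ ∈ F ∧
    (∀ X ∈ F, ∀ Y ∈ F, X ∪ Y ∈ F) ∧ (∀ X ∈ F, ∀ Y ∈ F, X ∩ Y ∈ F)

/-- `F` separates points: for any distinct `u, v` some member of `F` contains
exactly one of them. -/
def SepPoints (F : Set (Finset V)) : Prop :=
  ∀ u v : V, u ≠ v → ∃ X ∈ F, (u ∈ X ∧ v ∉ X) ∨ (v ∈ X ∧ u ∉ X)

/-- `M(v) = ⋃ {X ∈ F : v ∉ X}`, the largest member of `F` not containing `v`. -/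
noncomputable def Mset (F : Set (Finset V)) (v : V) : Finset V :=
  Finset.univ.filter fun u => ∃ X ∈ F, v ∉ X ∧ u ∈ X

/-- `ℓ(v) = f(M(v) ∪ {v}) - f(M(v))`. -/
noncomputable def ell (f : Finset V → ℝ) (F : Set (Finset V)) (v : V) : ℝ :=
  f (insert v (Mset F v)) - f (Mset F v)

/-- `Down(X) = ⋂ {Y ∈ F : X ⊆ Y}`, the smallest member of `F` containing `X`. -/
noncomputable def DownSet (F : Set (Finset V)) (X : Finset V) : Finset V :=
  Finset.univ.filter fun u => ∀ Y ∈ F, X ⊆ Y → u ∈ Y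

/-- `f↓(X) = f(Down(X)) - ℓ⁻(Down(X) \ X)`. -/
noncomputable def fdown (f : Finset V → ℝ) (F : Set (Finset V)) (X : Finset V) : ℝ :=
  f (DownSet F X) - ∑ v ∈ DownSet F X \ X, min (ell f F v) 0

lemma mem_Mset {F : Set (Finset V)} {v u : V} :
    u ∈ Mset F v ↔ ∃ X ∈ F, v ∉ X ∧ u ∈ X := by
  simp [Mset]

lemma not_mem_Mset_self {F : Set (Finset V)} (v : V) : v ∉ Mset F v := by
  rw [mem_Mset]
  rintro ⟨X, _, hv, hv'⟩
  exact hv hv'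

lemma Mset_mem_F {F : Set (Finset V)} (hF : IsRingFamily F) (v : V) :
    Mset F v ∈ F := by
  have h : Mset F v
      = ((Finset.univ : Finset (Finset V)).filter (fun X => X ∈ F ∧ v ∉ X)).sup id := by
    ext u
    simp only [mem_Mset, Finset.mem_sup, Finset.mem_filter, Finset.mem_univ, true_and, id]
    tauto
  rw [h]
  apply Finset.sup_induction
  · exact hF.1
  · exact fun a ha b hb => hF.2.2.1 a ha b hb
  · intro i hi
    exact (Finset.mem_filter.mp hi).2.1

/-- Key submodularity step: if `Y ∈ F`, `v ∈ Y` and `Y.erase v ⊆ M(v)`,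
then `f (Y.erase v) + ℓ(v) ≤ f Y`. -/
lemma ell_step (f : Finset V → ℝ) (hf : IsSubmodular f) {F : Set (Finset V)}
    {Y : Finset V} {v : V} (hvY : v ∈ Y) (hsub : Y.erase v ⊆ Mset F v) :
    f (Y.erase v) + ell f F v ≤ f Y := by
  have h := hf (Mset F v) Y
  have h1 : Mset F v ∩ Y = Y.erase v := by
    apply Finset.Subset.antisymm
    · intro u hu
      rw [Finset.mem_inter] at hu
      rw [Finset.mem_erase]
      refine ⟨?_, hu.2⟩
      rintro rfl
      exact not_mem_Mset_self _ hu.1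
    · intro u hu
      rw [Finset.mem_inter]
      exact ⟨hsub hu, Finset.mem_of_mem_erase hu⟩
  have h2 : Mset F v ∪ Y = insert v (Mset F v) := by
    apply Finset.Subset.antisymm
    · intro u hu
      rw [Finset.mem_union] at hu
      rcases hu with hu | hu
      · exact Finset.mem_insert_of_mem hu
      · by_cases huv : u = v
        · subst huv; exact Finset.mem_insert_self _ _
        · exact Finset.mem_insert_of_mem (hsub (Finset.mem_erase.mpr ⟨huv, hu⟩))
    · intro u hu
      rw [Finset.mem_insert] at hu
      rcases hu with rfl | hu
      · exact Finset.mem_union_right _ hvY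
      · exact Finset.mem_union_left _ hu
  rw [h1, h2] at h
  unfold ell
  linarith

theorem ring_family_lower_bound_aux (f : Finset V → ℝ) (hf : IsSubmodular f)
    (F : Set (Finset V)) (hF : IsRingFamily F) (hsep : SepPoints F) :
    ∀ n : ℕ, ∀ X ∈ F, ∀ Y ∈ F, X ⊆ Y → (Y \ X).card = n →
      f X + (∑ v ∈ Y \ X, ell f F v) ≤ f Y := by
  intro n
  induction n with
  | zero =>
    intro X hX Y hY hXY hcard
    have : Y \ X = ∅ := Finset.card_eq_zero.mp hcard
    have hXY' : X = Y := Finset.Subset.antisymm hXY (fun u hu => by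
      by_contra hu'
      have hm : u ∈ Y \ X := Finset.mem_sdiff.mpr ⟨hu, hu'⟩
      rw [this] at hm
      exact absurd hm (Finset.notMem_empty u))
    rw [this, hXY']
    simp
  | succ n ih =>
    intro X hX Y hY hXY hcard
    -- pick a maximal element of Y \ X
    have hne : (Y \ X).Nonempty := by
      rw [← Finset.card_pos, hcard]; omega
    obtain ⟨v, hv, hvmax⟩ := Finset.exists_max_image (Y \ X)
      (fun w => (Finset.univ.filter (fun u => ∀ Z ∈ F, w ∈ Z → u ∈ Z)).card) hne
    rw [Finset.mem_sdiff] at hv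
    -- every element of Y other than v lies in M(v)
    have hsub : Y.erase v ⊆ Mset F v := by
      intro u hu
      rw [Finset.mem_erase] at hu
      rw [mem_Mset]
      by_cases huX : u ∈ X
      · exact ⟨X, hX, hv.2, huX⟩
      · by_contra hcon
        push_neg at hcon
        -- then v ≤ u: every Z ∈ F containing u contains v
        have hle : ∀ Z ∈ F, u ∈ Z → v ∈ Z := by
          intro Z hZ huZ
          by_contra hvZ
          exact hcon Z hZ hvZ huZ
        have huYX : u ∈ Y \ X := Finset.mem_sdiff.mpr ⟨hu.2, huX⟩
        have hmono : (Finset.univ.filter (fun w => ∀ Z ∈ F, v ∈ Z → w ∈ Z))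
            ⊂ (Finset.univ.filter (fun w => ∀ Z ∈ F, u ∈ Z → w ∈ Z)) := by
          rw [Finset.ssubset_iff_of_subset]
          · refine ⟨u, ?_, ?_⟩
            · simp only [Finset.mem_filter, Finset.mem_univ, true_and]
              intro Z hZ h; exact h
            · simp only [Finset.mem_filter, Finset.mem_univ, true_and]
              intro hcon2
              -- then u ≤ v and v ≤ u; separation gives a contradiction
              obtain ⟨Z, hZ, hZ'⟩ := hsep u v hu.1
              rcases hZ' with ⟨huZ, hvZ⟩ | ⟨hvZ, huZ⟩
              · exact hvZ (hle Z hZ huZ)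
              · exact huZ (hcon2 Z hZ hvZ)
          · intro w hw
            simp only [Finset.mem_filter, Finset.mem_univ, true_and] at hw ⊢
            intro Z hZ huZ
            exact hw Z hZ (hle Z hZ huZ)
        have := Finset.card_lt_card hmono
        have := hvmax u huYX
        omega
    -- Y.erase v ∈ F
    have hYe : Y.erase v = Y ∩ Mset F v := by
      apply Finset.Subset.antisymm
      · intro u hu
        exact Finset.mem_inter.mpr ⟨Finset.mem_of_mem_erase hu, hsub hu⟩
      · intro u hu
        rw [Finset.mem_inter] at hu
        rw [Finset.mem_erase]
        refine ⟨?_, hu.1⟩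
        rintro rfl
        exact not_mem_Mset_self u hu.2
    have hYeF : Y.erase v ∈ F := by
      rw [hYe]
      exact hF.2.2.2 Y hY _ (Mset_mem_F hF v)
    have hXYe : X ⊆ Y.erase v := by
      intro u hu
      rw [Finset.mem_erase]
      exact ⟨fun h => hv.2 (h ▸ hu), hXY hu⟩
    have hcard' : (Y.erase v \ X).card = n := by
      have : Y.erase v \ X = (Y \ X).erase v := by
        ext u
        simp only [Finset.mem_sdiff, Finset.mem_erase]
        tauto
      rw [this, Finset.card_erase_of_mem (Finset.mem_sdiff.mpr hv), hcard]
      omega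
    have hih := ih X hX (Y.erase v) hYeF hXYe hcard'
    have hstep := ell_step f hf (F := F) hv.1 hsub
    have hsum : ∑ w ∈ Y \ X, ell f F w
        = ell f F v + ∑ w ∈ (Y \ X).erase v, ell f F w :=
      (Finset.add_sum_erase _ _ (Finset.mem_sdiff.mpr hv)).symm
    have hsd : Y.erase v \ X = (Y \ X).erase v := by
      ext u
      simp only [Finset.mem_sdiff, Finset.mem_erase]
      tauto
    rw [hsd] at hih
    rw [hsum]
    linarith

/-- For every `X, Y ∈ F` with `X ⊆ Y`: `f(X) + ∑_{v ∈ Y \ X} ℓ(v) ≤ f(Y)`. -/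
theorem ring_family_lower_bound (f : Finset V → ℝ) (hf : IsSubmodular f) (h0 : f ∅ = 0)
    (F : Set (Finset V)) (hF : IsRingFamily F) (hsep : SepPoints F) :
    ∀ X ∈ F, ∀ Y ∈ F, X ⊆ Y → f X + (∑ v ∈ Y \ X, ell f F v) ≤ f Y := by
  intro X hX Y hY hXY
  exact ring_family_lower_bound_aux f hf F hF hsep (Y \ X).card X hX Y hY hXY rfl
end
end

section
/- Let V be a finite set, f : 2^V → ℝ a submodular function with f(∅) = 0, and F ⊆ 2^V a ring family containing ∅ and V that separates points. Then the function f↓ : 2^V → ℝ is submodular with f↓(∅) = 0; moreover f↓(S) ≥ f(Down(S)) for all S ⊆ V, f↓(S) = f(S) for every S ∈ F, and consequently min_{S ⊆ V} f↓(S) = min_{S ∈ F} f(S). -/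
open Finset

noncomputable section
open scoped Classical

variable {V : Type*} [Fintype V] [DecidableEq V]

/-!
Write `ℓ⁻(S) = ∑_{v ∈ S} min (ℓ v) 0`, a modular function, so that
`f↓(X) = f(Down X) - ℓ⁻(Down X) + ℓ⁻(X)`. Since `Down (X ∪ Y) = Down X ∪ Down Y` and
`Down (X ∩ Y) ⊆ Down X ∩ Down Y`, submodularity of `f↓` reduces to submodularity of `f` plus
monotonicity of `f - ℓ⁻` along inclusions `A ⊆ B` of members of `F`. For the latter, separation
lets one grow `A` to `B` inside `F` one element at a time (add an element `v` of `B \ A` whose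
`Down {v}` is smallest), and submodularity of `f` against `M(v)` bounds each increment
`f(A ∪ {v}) - f(A)` from below by `ℓ(v) ≥ min (ℓ v) 0`.
-/

namespace IsRingFamily

variable {F : Set (Finset V)}

lemma union_mem (hF : IsRingFamily F) {X Y : Finset V} (hX : X ∈ F) (hY : Y ∈ F) : X ∪ Y ∈ F :=
  hF.2.2.1 X hX Y hY

lemma inter_mem (hF : IsRingFamily F) {X Y : Finset V} (hX : X ∈ F) (hY : Y ∈ F) : X ∩ Y ∈ F :=
  hF.2.2.2 X hX Y hY

end IsRingFamily

section DownSet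

variable {F : Set (Finset V)}

lemma mem_downSet {X : Finset V} {u : V} : u ∈ DownSet F X ↔ ∀ Y ∈ F, X ⊆ Y → u ∈ Y := by
  simp [DownSet]

lemma subset_downSet (F : Set (Finset V)) (X : Finset V) : X ⊆ DownSet F X :=
  fun _ hu => mem_downSet.2 fun _ _ hXY => hXY hu

lemma downSet_subset {X Y : Finset V} (hY : Y ∈ F) (hXY : X ⊆ Y) : DownSet F X ⊆ Y :=
  fun _ hu => mem_downSet.1 hu Y hY hXY

lemma downSet_eq_self_of_mem {X : Finset V} (hX : X ∈ F) : DownSet F X = X :=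
  (downSet_subset hX subset_rfl).antisymm (subset_downSet F X)

lemma downSet_mem (hF : IsRingFamily F) (X : Finset V) : DownSet F X ∈ F := by
  have hne : (univ.filter fun Y => Y ∈ F ∧ X ⊆ Y).Nonempty := ⟨univ, by simp [hF.2.1]⟩
  convert InfClosed.finsetInf'_mem (f := id) (fun _ hX _ hY => hF.inter_mem hX hY) hne
    fun Y hY => (mem_filter.1 hY).2.1
  ext u
  simp [mem_downSet]

lemma downSet_union (hF : IsRingFamily F) (X Y : Finset V) :
    DownSet F (X ∪ Y) = DownSet F X ∪ DownSet F Y :=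
  (downSet_subset (hF.union_mem (downSet_mem hF X) (downSet_mem hF Y))
    (union_subset_union (subset_downSet F X) (subset_downSet F Y))).antisymm
  (union_subset
    (downSet_subset (downSet_mem hF _) (subset_union_left.trans (subset_downSet F _)))
    (downSet_subset (downSet_mem hF _) (subset_union_right.trans (subset_downSet F _))))

lemma downSet_singleton_ssubset (hsep : SepPoints F) {u v : V} (hu : u ∈ DownSet F {v})
    (huv : u ≠ v) : DownSet F {u} ⊂ DownSet F {v} := by
  have hsub : DownSet F {u} ⊆ DownSet F {v} := fun w hw =>
    mem_downSet.2 fun Y hY hvY =>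
      mem_downSet.1 hw Y hY (singleton_subset_iff.2 (mem_downSet.1 hu Y hY hvY))
  refine ssubset_iff_of_subset hsub |>.2 ⟨v, subset_downSet F {v} (mem_singleton_self v), ?_⟩
  obtain ⟨X, hX, ⟨huX, hvX⟩ | ⟨hvX, huX⟩⟩ := hsep u v huv
  · exact fun hv => hvX (downSet_subset hX (singleton_subset_iff.2 huX) hv)
  · exact absurd (downSet_subset hX (singleton_subset_iff.2 hvX) hu) huX

lemma exists_insert_mem (hF : IsRingFamily F) (hsep : SepPoints F) {A B : Finset V}
    (hA : A ∈ F) (hB : B ∈ F) (hAB : A ⊂ B) : ∃ v ∈ B \ A, insert v A ∈ F := by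
  obtain ⟨v, hv, hmin⟩ := exists_min_image (B \ A) (fun u => #(DownSet F {u}))
    (sdiff_nonempty.2 (not_subset_of_ssubset hAB))
  have hvB : v ∈ B := (mem_sdiff.1 hv).1
  have hdown : DownSet F {v} ⊆ insert v A := by
    intro u hu
    by_contra hu'
    rw [mem_insert, not_or] at hu'
    have huB : u ∈ B := downSet_subset hB (singleton_subset_iff.2 hvB) hu
    exact (card_lt_card (downSet_singleton_ssubset hsep hu hu'.1)).not_ge
      (hmin u (mem_sdiff.2 ⟨huB, hu'.2⟩))
  have hinsert : insert v A = A ∪ DownSet F {v} :=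
    (insert_subset (mem_union_right _ (subset_downSet F {v} (mem_singleton_self v)))
      subset_union_left).antisymm (union_subset (subset_insert v A) hdown)
  exact ⟨v, hv, hinsert ▸ hF.union_mem hA (downSet_mem hF {v})⟩

end DownSet

section Ell

variable {f : Finset V → ℝ} {F : Set (Finset V)}

lemma ell_le_sub_of_mem (hf : IsSubmodular f) {A : Finset V} {v : V} (hA : A ∈ F) (hv : v ∉ A) :
    ell f F v ≤ f (insert v A) - f A := by
  have hAM : A ⊆ Mset F v := fun u hu => by
    simp only [Mset, mem_filter, mem_univ, true_and]
    exact ⟨A, hA, hv, hu⟩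
  have hvM : v ∉ Mset F v := by simp [Mset]
  have h := hf (insert v A) (Mset F v)
  rw [insert_inter_of_notMem hvM, inter_eq_left.2 hAM, insert_union, union_eq_right.2 hAM] at h
  unfold ell
  linarith

lemma add_sum_ell_le (hf : IsSubmodular f) (hF : IsRingFamily F) (hsep : SepPoints F)
    {A B : Finset V} (hA : A ∈ F) (hB : B ∈ F) (hAB : A ⊆ B) :
    f A + ∑ v ∈ B \ A, ell f F v ≤ f B := by
  induction hn : #(B \ A) generalizing A with
  | zero =>
    rw [card_eq_zero, sdiff_eq_empty_iff_subset] at hn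
    simp [hAB.antisymm hn]
  | succ n ih =>
    have hne : A ≠ B := by rintro rfl; simp at hn
    obtain ⟨v, hv, hvA⟩ :=
      exists_insert_mem hF hsep hA hB (Finset.ssubset_iff_subset_ne.2 ⟨hAB, hne⟩)
    have hstep := ih hvA (insert_subset (mem_sdiff.1 hv).1 hAB)
      (by rw [sdiff_insert, card_erase_of_mem hv, hn, Nat.add_sub_cancel])
    rw [sdiff_insert] at hstep
    rw [← add_sum_erase _ _ hv]
    have := ell_le_sub_of_mem hf hA (mem_sdiff.1 hv).2
    linarith

end Ell

def ellNeg (f : Finset V → ℝ) (F : Set (Finset V)) (S : Finset V) : ℝ :=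
  ∑ v ∈ S, min (ell f F v) 0

section EllNeg

variable {f : Finset V → ℝ} {F : Set (Finset V)}

lemma ellNeg_nonpos (S : Finset V) : ellNeg f F S ≤ 0 :=
  sum_nonpos fun _ _ => min_le_right _ _

lemma ellNeg_union_add_inter (X Y : Finset V) :
    ellNeg f F (X ∪ Y) + ellNeg f F (X ∩ Y) = ellNeg f F X + ellNeg f F Y :=
  sum_union_inter

lemma ellNeg_sdiff_add {X Y : Finset V} (hXY : X ⊆ Y) :
    ellNeg f F (Y \ X) + ellNeg f F X = ellNeg f F Y :=
  sum_sdiff hXY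

lemma sub_ellNeg_le_of_subset (hf : IsSubmodular f) (hF : IsRingFamily F) (hsep : SepPoints F)
    {A B : Finset V} (hA : A ∈ F) (hB : B ∈ F) (hAB : A ⊆ B) :
    f A - ellNeg f F A ≤ f B - ellNeg f F B := by
  have hchain := add_sum_ell_le hf hF hsep hA hB hAB
  have hmin : ellNeg f F (B \ A) ≤ ∑ v ∈ B \ A, ell f F v := sum_le_sum fun _ _ => min_le_left _ _
  have := ellNeg_sdiff_add (f := f) (F := F) hAB
  linarith

end EllNeg

section Fdown

variable {f : Finset V → ℝ} {F : Set (Finset V)}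

lemma fdown_eq (X : Finset V) :
    fdown f F X = f (DownSet F X) - ellNeg f F (DownSet F X) + ellNeg f F X := by
  have := ellNeg_sdiff_add (f := f) (F := F) (subset_downSet F X)
  change f _ - ellNeg f F _ = _
  linarith

lemma fdown_of_mem {S : Finset V} (hS : S ∈ F) : fdown f F S = f S := by
  simp [fdown, downSet_eq_self_of_mem hS]

lemma le_fdown (S : Finset V) : f (DownSet F S) ≤ fdown f F S :=
  le_sub_self_iff _ |>.2 (ellNeg_nonpos (DownSet F S \ S))

theorem isSubmodular_fdown (hf : IsSubmodular f) (hF : IsRingFamily F) (hsep : SepPoints F) :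
    IsSubmodular (fdown f F) := by
  intro X Y
  have hA := downSet_mem hF X
  have hB := downSet_mem hF Y
  have hC : DownSet F (X ∩ Y) ⊆ DownSet F X ∩ DownSet F Y :=
    downSet_subset (hF.inter_mem hA hB)
      (inter_subset_inter (subset_downSet F X) (subset_downSet F Y))
  have hmono := sub_ellNeg_le_of_subset hf hF hsep (downSet_mem hF _) (hF.inter_mem hA hB) hC
  have := hf (DownSet F X) (DownSet F Y)
  have := ellNeg_union_add_inter (f := f) (F := F) (DownSet F X) (DownSet F Y)
  have := ellNeg_union_add_inter (f := f) (F := F) X Y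
  simp only [fdown_eq, downSet_union hF]
  linarith

lemma sInf_fdown_eq (hF : IsRingFamily F) :
    sInf {t : ℝ | ∃ S : Finset V, t = fdown f F S} = sInf {t : ℝ | ∃ S ∈ F, t = f S} := by
  have hbdd : BddBelow {t : ℝ | ∃ S : Finset V, t = fdown f F S} :=
    ((Set.finite_range (fdown f F)).subset <| by rintro _ ⟨S, rfl⟩; exact ⟨S, rfl⟩).bddBelow
  have hbddF : BddBelow {t : ℝ | ∃ S ∈ F, t = f S} :=
    ((Set.finite_range f).subset <| by rintro _ ⟨S, -, rfl⟩; exact ⟨S, rfl⟩).bddBelow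
  apply le_antisymm
  · refine csInf_le_csInf hbdd ⟨f ∅, ∅, hF.1, rfl⟩ ?_
    rintro _ ⟨S, hS, rfl⟩
    exact ⟨S, (fdown_of_mem hS).symm⟩
  · refine le_csInf ⟨_, ∅, rfl⟩ ?_
    rintro _ ⟨S, rfl⟩
    exact (csInf_le hbddF ⟨DownSet F S, downSet_mem hF S, rfl⟩).trans (le_fdown S)

end Fdown

/-- `f↓` is submodular with `f↓(∅) = 0`, `f↓(S) ≥ f(Down(S))` for all `S`,
`f↓(S) = f(S)` for `S ∈ F`, and `min_{S ⊆ V} f↓(S) = min_{S ∈ F} f(S)`. -/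
theorem fdown_submodular (f : Finset V → ℝ) (hf : IsSubmodular f) (h0 : f ∅ = 0)
    (F : Set (Finset V)) (hF : IsRingFamily F) (hsep : SepPoints F) :
    IsSubmodular (fdown f F) ∧ fdown f F ∅ = 0 ∧
    (∀ S : Finset V, f (DownSet F S) ≤ fdown f F S) ∧
    (∀ S ∈ F, fdown f F S = f S) ∧
    sInf {t : ℝ | ∃ S : Finset V, t = fdown f F S} =
      sInf {t : ℝ | ∃ S ∈ F, t = f S} :=
  ⟨isSubmodular_fdown hf hF hsep, (fdown_of_mem hF.1).trans h0, le_fdown,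
    fun _ => fdown_of_mem, sInf_fdown_eq hF⟩
end
end

section
/- Let V be a finite set, f : 2^V → ℝ a submodular function with f(∅) = 0, and F ⊆ 2^V a ring family containing ∅ and V that separates points. Then for every v ∈ V, the quantity f↓(V) − f↓(V\{v}) equals either min{ℓ(v), 0} or ℓ(v). In particular, y(v) ≥ min{ℓ(v), 0} for every y ∈ B(f↓) and every v ∈ V. -/
open Finset

noncomputable section
open scoped Classical

variable {V : Type*} [Fintype V] [DecidableEq V]

/-- For every `v`, `f↓(V) - f↓(V \ {v})` equals either `min{ℓ(v), 0}` or `ℓ(v)`;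
in particular `y(v) ≥ min{ℓ(v), 0}` for every `y ∈ B(f↓)`. -/
theorem fdown_marginal (f : Finset V → ℝ) (hf : IsSubmodular f) (h0 : f ∅ = 0)
    (F : Set (Finset V)) (hF : IsRingFamily F) (hsep : SepPoints F) :
    (∀ v : V,
      fdown f F Finset.univ - fdown f F (Finset.univ \ {v}) = min (ell f F v) 0 ∨
      fdown f F Finset.univ - fdown f F (Finset.univ \ {v}) = ell f F v) ∧
    ∀ y ∈ basePolytope (fdown f F), ∀ v : V, min (ell f F v) 0 ≤ y v := by
  have key : ∀ v : V,
      fdown f F Finset.univ - fdown f F (Finset.univ \ {v}) = min (ell f F v) 0 ∨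
      fdown f F Finset.univ - fdown f F (Finset.univ \ {v}) = ell f F v := by
    intro v
    have hDuniv : DownSet F (Finset.univ : Finset V) = Finset.univ := by
      apply Finset.eq_univ_iff_forall.mpr
      intro u
      simp only [DownSet, Finset.mem_filter, Finset.mem_univ, true_and]
      intro Y _ hsub
      exact hsub (Finset.mem_univ u)
    have hfd_univ : fdown f F Finset.univ = f Finset.univ := by
      simp [fdown, hDuniv]
    set X : Finset V := Finset.univ \ {v} with hX
    have hsubD : X ⊆ DownSet F X := by
      intro u hu
      simp only [DownSet, Finset.mem_filter, Finset.mem_univ, true_and]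
      intro Y _ hXY
      exact hXY hu
    by_cases hv : v ∈ DownSet F X
    · have hD : DownSet F X = Finset.univ := by
        apply Finset.eq_univ_iff_forall.mpr
        intro u
        by_cases huv : u = v
        · subst huv; exact hv
        · exact hsubD (by simp [hX, huv])
      have hdiff : DownSet F X \ X = {v} := by
        rw [hD, hX]
        ext u
        simp [Finset.mem_sdiff]
      left
      rw [hfd_univ, fdown, hdiff, hD]
      simp
    · have hEx : ∃ Y ∈ F, X ⊆ Y ∧ v ∉ Y := by
        by_contra h
        push_neg at h
        apply hv
        simp only [DownSet, Finset.mem_filter, Finset.mem_univ, true_and]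
        intro Y hYF hXY
        exact h Y hYF hXY
      obtain ⟨Y, hYF, hXY, hvY⟩ := hEx
      have hYeq : Y = X := by
        apply Finset.Subset.antisymm _ hXY
        intro u hu
        simp only [hX, Finset.mem_sdiff, Finset.mem_univ, Finset.mem_singleton, true_and]
        rintro rfl
        exact hvY hu
      have hM : Mset F v = X := by
        apply Finset.Subset.antisymm
        · intro u hu
          simp only [Mset, Finset.mem_filter, Finset.mem_univ, true_and] at hu
          obtain ⟨Z, hZF, hvZ, huZ⟩ := hu
          simp only [hX, Finset.mem_sdiff, Finset.mem_univ, Finset.mem_singleton, true_and]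
          rintro rfl
          exact hvZ huZ
        · intro u hu
          simp only [Mset, Finset.mem_filter, Finset.mem_univ, true_and]
          exact ⟨Y, hYF, hvY, hXY hu⟩
      have hD : DownSet F X = X := by
        apply Finset.Subset.antisymm _ hsubD
        intro u hu
        simp only [DownSet, Finset.mem_filter, Finset.mem_univ, true_and] at hu
        exact hYeq ▸ hu Y hYF hXY
      right
      have hins : insert v X = Finset.univ := by
        apply Finset.eq_univ_iff_forall.mpr
        intro u
        by_cases huv : u = v
        · subst huv; exact Finset.mem_insert_self _ _
        · exact Finset.mem_insert_of_mem (by simp [hX, huv])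
      rw [hfd_univ, fdown, hD, Finset.sdiff_self, Finset.sum_empty, ell, hM, hins]
      ring
  refine ⟨key, ?_⟩
  intro y hy v
  obtain ⟨hle, heq⟩ := hy
  have h1 : ∑ u ∈ Finset.univ \ {v}, y u ≤ fdown f F (Finset.univ \ {v}) := hle _
  have h2 : ∑ u ∈ Finset.univ \ {v}, y u + y v = ∑ u, y u := by
    have : (Finset.univ \ {v} : Finset V) = Finset.univ.erase v := by
      simp [Finset.sdiff_singleton_eq_erase]
    rw [this]
    exact Finset.sum_erase_add _ _ (Finset.mem_univ v)
  have h3 : min (ell f F v) 0 ≤ fdown f F Finset.univ - fdown f F (Finset.univ \ {v}) := by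
    rcases key v with h | h
    · rw [h]
    · rw [h]; exact min_le_left _ _
  rw [heq] at h2
  linarith
end
end

section
/- Let V be a finite set, f : 2^V → ℝ a submodular function with f(∅) = 0, and F ⊆ 2^V a ring family containing ∅ and V that separates points, such that every minimizer of f over 2^V belongs to F. If ℓ(v) ≥ 0 for every v ∈ V, then f(S) ≥ 0 for every S ⊆ V. -/
open Finset

noncomputable section
open scoped Classical

variable {V : Type*} [Fintype V] [DecidableEq V]

/-- Diminishing returns. -/
lemma dim_ret (f : Finset V → ℝ) (hf : IsSubmodular f) {A B : Finset V} {v : V}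
    (hAB : A ⊆ B) (hv : v ∉ B) :
    f (insert v B) - f B ≤ f (insert v A) - f A := by
  have h := hf (insert v A) B
  have h1 : insert v A ∩ B = A := by
    ext u
    simp only [Finset.mem_inter, Finset.mem_insert]
    constructor
    · rintro ⟨rfl | hu, hb⟩
      · exact absurd hb hv
      · exact hu
    · intro hu; exact ⟨Or.inr hu, hAB hu⟩
  have h2 : insert v A ∪ B = insert v B := by
    ext u
    simp only [Finset.mem_union, Finset.mem_insert]
    constructor
    · rintro ((rfl | hu) | hb)
      · exact Or.inl rfl
      · exact Or.inr (hAB hu)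
      · exact Or.inr hb
    · rintro (rfl | hb)
      · exact Or.inl (Or.inl rfl)
      · exact Or.inr hb
  rw [h1, h2] at h
  linarith

/-- If every minimizer of `f` belongs to the ring family `F`, and `ℓ(v) ≥ 0` for
every `v ∈ V`, then `f(S) ≥ 0` for every `S ⊆ V`. -/
theorem ell_nonneg_implies_f_nonneg (f : Finset V → ℝ) (hf : IsSubmodular f)
    (h0 : f ∅ = 0)
    (F : Set (Finset V)) (hF : IsRingFamily F) (hsep : SepPoints F)
    (hmin : ∀ S : Finset V, (∀ T : Finset V, f S ≤ f T) → S ∈ F)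
    (hell : ∀ v : V, 0 ≤ ell f F v) :
    ∀ S : Finset V, 0 ≤ f S := by
  intro S
  induction S using Finset.strongInduction with
  | _ S ih =>
  rcases S.eq_empty_or_nonempty with rfl | hne
  · simp [h0]
  · obtain ⟨v, hvS, hmax⟩ := S.exists_max_image (fun v => (DownSet F {v}).card) hne
    have hvM : v ∉ Mset F v := by
      simp only [Mset, Finset.mem_filter, Finset.mem_univ, true_and]
      rintro ⟨X, hX, hvX, hvX'⟩
      exact hvX hvX'
    have hsub : S.erase v ⊆ Mset F v := by
      intro u hu
      have huS := Finset.mem_of_mem_erase hu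
      have hne' : u ≠ v := Finset.ne_of_mem_erase hu
      by_contra hnot
      have hle : ∀ X ∈ F, u ∈ X → v ∈ X := by
        intro X hX huX
        by_contra hv'
        exact hnot (by
          simp only [Mset, Finset.mem_filter, Finset.mem_univ, true_and]
          exact ⟨X, hX, hv', huX⟩)
      have hsubD : DownSet F {v} ⊆ DownSet F {u} := by
        intro w hw
        simp only [DownSet, Finset.mem_filter, Finset.mem_univ, true_and,
          Finset.singleton_subset_iff] at hw ⊢
        intro Y hY huY
        exact hw Y hY (hle Y hY huY)
      have huD : u ∈ DownSet F {u} := by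
        simp only [DownSet, Finset.mem_filter, Finset.mem_univ, true_and,
          Finset.singleton_subset_iff]
        intro Y hY huY
        exact huY
      have huDv : u ∉ DownSet F {v} := by
        obtain ⟨X, hX, hcase⟩ := hsep u v hne'
        rcases hcase with ⟨hu1, hv1⟩ | ⟨hv1, hu1⟩
        · exact absurd (hle X hX hu1) hv1
        · simp only [DownSet, Finset.mem_filter, Finset.mem_univ, true_and,
            Finset.singleton_subset_iff, not_forall]
          exact ⟨X, hX, hv1, hu1⟩
      have hlt : (DownSet F {v}).card < (DownSet F {u}).card :=
        Finset.card_lt_card ((Finset.ssubset_iff_of_subset hsubD).mpr ⟨u, huD, huDv⟩)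
      exact absurd (hmax u huS) (not_le.mpr hlt)
    have hd := dim_ret f hf hsub hvM
    have hS : insert v (S.erase v) = S := Finset.insert_erase hvS
    have hprev : 0 ≤ f (S.erase v) := ih _ (Finset.erase_ssubset hvS)
    have hl := hell v
    unfold ell at hl
    rw [hS] at hd
    linarith
end
end

section
/- Let A ∈ ℝ^{n×p} (p ≥ 1) have nonzero columns a₁, …, a_p, let R ∈ ℝ^{n×n} be symmetric positive definite, Q = R⁻¹, and ε ≥ 0. Let x ∈ ℝ^p with x ≥ 0 be such that y := ∑_{i=1}^p x_i a_i/‖a_i‖_Q satisfies ‖y‖_Q ≤ ε. Define R′ := (1/(1+ε)²)(R + ∑_{i=1}^p (x_i/‖a_i‖_Q²) a_i a_iᵀ), which is symmetric positive definite, and Q′ := (R′)⁻¹. Then for every v ∈ ℝⁿ there exists ν ∈ ℝ^p with ν ≥ 0 such that ‖v + Aν‖_Q ≤ ‖v‖_{Q′}. -/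
/-!
Normalize the columns to `bᵢ = aᵢ/‖aᵢ‖_Q` and put `S = R + ∑ xᵢ bᵢ bᵢᵀ`, so that `R' = S/(1+ε)²`.
Given `v`, let `u = S⁻¹v` and `c = ‖u‖_R = ‖Ru‖_Q`. Then `v = Ru + ∑ xᵢ (bᵢᵀu) bᵢ`, and
`bᵢᵀu = ⟨bᵢ, Ru⟩_Q ≤ c` by Cauchy–Schwarz. The weights `μᵢ = xᵢ (c - bᵢᵀu) ≥ 0` turn
`v + ∑ μᵢ bᵢ` into `Ru + c y`, whose `Q`-norm is at most `c (1 + ε)`, while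
`c² = uᵀRu ≤ uᵀSu = vᵀS⁻¹v`.
-/

open Matrix

noncomputable section

/-- `‖v‖_Q = √(vᵀ Q v)`, the norm induced by a symmetric positive definite `Q`. -/
noncomputable def Qnorm {n : ℕ} (Q : Matrix (Fin n) (Fin n) ℝ) (v : Fin n → ℝ) : ℝ :=
  Real.sqrt (v ⬝ᵥ Q.mulVec v)

/-- The rescaled matrix
`R' = (1/(1+ε)²) (R + ∑_i (x_i/‖a_i‖_Q²) a_i a_iᵀ)`, where `a_i` are the columns
of `A` and `Q = R⁻¹`. -/
noncomputable def rescaledR {n p : ℕ} (A : Matrix (Fin n) (Fin p) ℝ)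
    (R : Matrix (Fin n) (Fin n) ℝ) (ε : ℝ) (x : Fin p → ℝ) :
    Matrix (Fin n) (Fin n) ℝ :=
  ((1 + ε) ^ 2)⁻¹ •
    (R + ∑ i : Fin p,
      (x i / (Qnorm R⁻¹ (fun j => A j i)) ^ 2) •
        vecMulVec (fun j => A j i) (fun j => A j i))

section Qnorm

variable {n : ℕ} {Q : Matrix (Fin n) (Fin n) ℝ}

variable (Q) in
lemma Qnorm_nonneg (v : Fin n → ℝ) : 0 ≤ Qnorm Q v :=
  Real.sqrt_nonneg _

variable (Q) in
lemma Qnorm_smul (c : ℝ) (v : Fin n → ℝ) :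
    Qnorm Q (c • v) = |c| * Qnorm Q v := by
  rw [Qnorm, Qnorm, mulVec_smul, dotProduct_smul, smul_dotProduct, smul_eq_mul, smul_eq_mul,
    ← mul_assoc, Real.sqrt_mul (mul_self_nonneg c), Real.sqrt_mul_self_eq_abs]

variable (Q) in
lemma Qnorm_smul_matrix {c : ℝ} (hc : 0 ≤ c) (v : Fin n → ℝ) :
    Qnorm (c • Q) v = √c * Qnorm Q v := by
  rw [Qnorm, Qnorm, smul_mulVec, dotProduct_smul, smul_eq_mul, Real.sqrt_mul hc]

lemma Qnorm_inv_mulVec (hQ : IsUnit Q.det) (v : Fin n → ℝ) :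
    Qnorm Q⁻¹ (Q *ᵥ v) = Qnorm Q v := by
  rw [Qnorm, Qnorm, mulVec_mulVec, nonsing_inv_mul _ hQ, one_mulVec, dotProduct_comm]

lemma Qnorm_le_Qnorm_add {P : Matrix (Fin n) (Fin n) ℝ} (hP : P.PosSemidef) (v : Fin n → ℝ) :
    Qnorm Q v ≤ Qnorm (Q + P) v := by
  refine Real.sqrt_le_sqrt ?_
  rw [add_mulVec, dotProduct_add, le_add_iff_nonneg_right]
  simpa using hP.dotProduct_mulVec_nonneg v

lemma Qnorm_inv_smul_inv {c : ℝ} (hc : 0 < c) (hQ : IsUnit Q.det) (v : Fin n → ℝ) :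
    Qnorm (c⁻¹ • Q)⁻¹ v = √c * Qnorm Q⁻¹ v := by
  let := invertibleOfNonzero (inv_ne_zero hc.ne')
  rw [Matrix.inv_smul Q c⁻¹ hQ, invOf_eq_inv, inv_inv, Qnorm_smul_matrix _ hc.le]

-- `Fin n → ℝ` already carries the sup norm, so the inner product space of `Q` is passed
-- explicitly.
lemma Qnorm_eq_norm (hQ : Q.PosSemidef) (v : Fin n → ℝ) :
    Qnorm Q v = @norm _ (Q.toSeminormedAddCommGroup hQ).toNorm v := by
  let := Q.toSeminormedAddCommGroup hQ
  let := Q.toInnerProductSpace hQ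
  rw [@norm_eq_sqrt_re_inner ℝ]
  change _ = √((Q *ᵥ v) ⬝ᵥ star v)
  simp [Qnorm, dotProduct_comm]

lemma dotProduct_mulVec_eq_inner (hQ : Q.PosSemidef) (u v : Fin n → ℝ) :
    u ⬝ᵥ Q *ᵥ v = @inner ℝ _ (Q.toInnerProductSpace hQ).toInner u v := by
  change _ = (Q *ᵥ v) ⬝ᵥ star u
  simp [dotProduct_comm]

lemma dotProduct_mulVec_le_Qnorm_mul (hQ : Q.PosSemidef) (u v : Fin n → ℝ) :
    u ⬝ᵥ Q *ᵥ v ≤ Qnorm Q u * Qnorm Q v := by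
  let := Q.toSeminormedAddCommGroup hQ
  let := Q.toInnerProductSpace hQ
  rw [dotProduct_mulVec_eq_inner hQ, Qnorm_eq_norm hQ, Qnorm_eq_norm hQ]
  exact real_inner_le_norm u v

lemma Qnorm_add_le (hQ : Q.PosSemidef) (u v : Fin n → ℝ) :
    Qnorm Q (u + v) ≤ Qnorm Q u + Qnorm Q v := by
  simp only [Qnorm_eq_norm hQ]
  exact @norm_add_le _ (Q.toSeminormedAddCommGroup hQ).toSeminormedAddGroup u v

end Qnorm

section vecMulVec

variable {m ι : Type*} [Fintype m] [Fintype ι]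

lemma sum_smul_vecMulVec_self_mulVec {α : Type*} [CommSemiring α] (x : ι → α) (b : ι → m → α)
    (u : m → α) : (∑ i, x i • vecMulVec (b i) (b i)) *ᵥ u = ∑ i, (x i * (b i ⬝ᵥ u)) • b i := by
  simp [sum_mulVec, smul_mulVec, vecMulVec_mulVec, smul_smul]

lemma posSemidef_sum_smul_vecMulVec_self {x : ι → ℝ} (hx : ∀ i, 0 ≤ x i) (b : ι → m → ℝ) :
    (∑ i, x i • vecMulVec (b i) (b i)).PosSemidef :=
  posSemidef_sum _ fun i _ => by simpa using (posSemidef_vecMulVec_self_star (b i)).smul (hx i)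

end vecMulVec

theorem exists_nonneg_Qnorm_add_sum_smul_le {n : ℕ} {ι : Type*} [Fintype ι]
    {R : Matrix (Fin n) (Fin n) ℝ} (hR : R.PosDef)
    {b : ι → Fin n → ℝ} (hb : ∀ i, Qnorm R⁻¹ (b i) ≤ 1)
    {x : ι → ℝ} (hx : ∀ i, 0 ≤ x i) {ε : ℝ} (hy : Qnorm R⁻¹ (∑ i, x i • b i) ≤ ε)
    (v : Fin n → ℝ) :
    ∃ μ : ι → ℝ, (∀ i, 0 ≤ μ i) ∧
      Qnorm R⁻¹ (v + ∑ i, μ i • b i) ≤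
        (1 + ε) * Qnorm (R + ∑ i, x i • vecMulVec (b i) (b i))⁻¹ v := by
  set S := R + ∑ i, x i • vecMulVec (b i) (b i)
  set y := ∑ i, x i • b i
  have hP := posSemidef_sum_smul_vecMulVec_self hx b
  have hRdet : IsUnit R.det := (isUnit_iff_isUnit_det R).1 hR.isUnit
  have hSdet : IsUnit S.det := (isUnit_iff_isUnit_det S).1 (hR.add_posSemidef hP).isUnit
  set u := S⁻¹ *ᵥ v
  set c := Qnorm R u
  have hSu : S *ᵥ u = v := by rw [mulVec_mulVec, mul_nonsing_inv _ hSdet, one_mulVec]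
  have hv : v = R *ᵥ u + ∑ i, (x i * (b i ⬝ᵥ u)) • b i := by
    rw [← hSu, add_mulVec, sum_smul_vecMulVec_self_mulVec]
  have hbu : ∀ i, b i ⬝ᵥ u ≤ c := fun i =>
    calc b i ⬝ᵥ u = b i ⬝ᵥ R⁻¹ *ᵥ (R *ᵥ u) := by
          rw [mulVec_mulVec, nonsing_inv_mul _ hRdet, one_mulVec]
      _ ≤ Qnorm R⁻¹ (b i) * Qnorm R⁻¹ (R *ᵥ u) :=
          dotProduct_mulVec_le_Qnorm_mul hR.inv.posSemidef _ _
      _ ≤ c := by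
          rw [Qnorm_inv_mulVec hRdet]
          exact mul_le_of_le_one_left (Qnorm_nonneg _ _) (hb i)
  refine ⟨fun i => x i * (c - b i ⬝ᵥ u), fun i => mul_nonneg (hx i) (sub_nonneg.2 (hbu i)), ?_⟩
  have hsum : v + ∑ i, (x i * (c - b i ⬝ᵥ u)) • b i = R *ᵥ u + c • y := by
    rw [hv, add_assoc, ← Finset.sum_add_distrib, Finset.smul_sum]
    congr 1
    refine Finset.sum_congr rfl fun i _ => ?_
    rw [← add_smul, smul_smul]
    ring_nf
  have hε : 0 ≤ 1 + ε := by linarith [(Qnorm_nonneg R⁻¹ y).trans hy]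
  calc Qnorm R⁻¹ (v + ∑ i, (x i * (c - b i ⬝ᵥ u)) • b i)
      = Qnorm R⁻¹ (R *ᵥ u + c • y) := by rw [hsum]
    _ ≤ Qnorm R⁻¹ (R *ᵥ u) + Qnorm R⁻¹ (c • y) := Qnorm_add_le hR.inv.posSemidef _ _
    _ = c + c * Qnorm R⁻¹ y := by
        rw [Qnorm_inv_mulVec hRdet, Qnorm_smul, abs_of_nonneg (Qnorm_nonneg _ _)]
    _ ≤ (1 + ε) * c := by nlinarith [Qnorm_nonneg R u]
    _ ≤ (1 + ε) * Qnorm S u := mul_le_mul_of_nonneg_left (Qnorm_le_Qnorm_add hP u) hε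
    _ = (1 + ε) * Qnorm S⁻¹ v := by rw [← Qnorm_inv_mulVec hSdet, hSu]

theorem pullback_general {n p : ℕ}
    (A : Matrix (Fin n) (Fin p) ℝ)
    (R : Matrix (Fin n) (Fin n) ℝ) (hR : R.PosDef)
    (ε : ℝ)
    (x : Fin p → ℝ) (hx : ∀ i, 0 ≤ x i)
    (hy : Qnorm R⁻¹
      (fun j => ∑ i, x i * A j i / Qnorm R⁻¹ (fun j' => A j' i)) ≤ ε) :
    (rescaledR A R ε x).PosDef ∧
    ∀ v : Fin n → ℝ, ∃ ν : Fin p → ℝ, (∀ i, 0 ≤ ν i) ∧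
      Qnorm R⁻¹ (v + A.mulVec ν) ≤ Qnorm (rescaledR A R ε x)⁻¹ v := by
  set a : Fin p → Fin n → ℝ := fun i j => A j i
  set b : Fin p → Fin n → ℝ := fun i => (Qnorm R⁻¹ (a i))⁻¹ • a i
  have hb : ∀ i, Qnorm R⁻¹ (b i) ≤ 1 := fun i => by
    rw [Qnorm_smul, abs_inv, abs_of_nonneg (Qnorm_nonneg _ _)]
    exact inv_mul_le_one_of_le₀ le_rfl (Qnorm_nonneg _ _)
  have hy' : Qnorm R⁻¹ (∑ i, x i • b i) ≤ ε := by
    convert hy using 2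
    ext j
    simp only [Finset.sum_apply, Pi.smul_apply, smul_eq_mul, b, a]
    exact Finset.sum_congr rfl fun i _ => by ring
  have hε : 0 ≤ ε := (Qnorm_nonneg _ _).trans hy
  have hS := hR.add_posSemidef (posSemidef_sum_smul_vecMulVec_self hx b)
  have hR' : rescaledR A R ε x = ((1 + ε) ^ 2)⁻¹ • (R + ∑ i, x i • vecMulVec (b i) (b i)) := by
    simp only [rescaledR, b, a, smul_vecMulVec, vecMulVec_smul, smul_smul, div_eq_mul_inv, sq,
      mul_inv]
  refine ⟨hR' ▸ hS.smul (by positivity), fun v => ?_⟩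
  obtain ⟨μ, hμ, hle⟩ := exists_nonneg_Qnorm_add_sum_smul_le hR hb hx hy' v
  refine ⟨fun i => (Qnorm R⁻¹ (a i))⁻¹ * μ i,
    fun i => mul_nonneg (inv_nonneg.2 (Qnorm_nonneg _ _)) (hμ i), ?_⟩
  have hAν : A *ᵥ (fun i => (Qnorm R⁻¹ (a i))⁻¹ * μ i) = ∑ i, μ i • b i := by
    ext j
    simp [b, a, mulVec, dotProduct, Finset.sum_apply, mul_comm, mul_left_comm]
  rw [hAν, hR', Qnorm_inv_smul_inv (by positivity) ((isUnit_iff_isUnit_det _).1 hS.isUnit),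
    Real.sqrt_sq (by positivity)]
  exact hle

/-- The pull-back lemma: if `y = ∑_i x_i a_i/‖a_i‖_Q` has `‖y‖_Q ≤ ε`, then `R'`
is symmetric positive definite, and for every `v ∈ ℝⁿ` there exists `ν ≥ 0` with
`‖v + Aν‖_Q ≤ ‖v‖_{Q'}`, where `Q' = (R')⁻¹`. -/
theorem pullback {n p : ℕ} (hp : 1 ≤ p)
    (A : Matrix (Fin n) (Fin p) ℝ)
    (hA : ∀ i : Fin p, (fun j => A j i) ≠ (0 : Fin n → ℝ))
    (R : Matrix (Fin n) (Fin n) ℝ) (hR : R.PosDef)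
    (ε : ℝ) (hε : 0 ≤ ε)
    (x : Fin p → ℝ) (hx : ∀ i, 0 ≤ x i)
    (hy : Qnorm R⁻¹
      (fun j => ∑ i, x i * A j i / Qnorm R⁻¹ (fun j' => A j' i)) ≤ ε) :
    (rescaledR A R ε x).PosDef ∧
    ∀ v : Fin n → ℝ, ∃ ν : Fin p → ℝ, (∀ i, 0 ≤ ν i) ∧
      Qnorm R⁻¹ (v + A.mulVec ν) ≤ Qnorm (rescaledR A R ε x)⁻¹ v :=
  pullback_general A R hR ε x hx hy
end
end
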